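/- arXiv:0810.4806 — 5 statements merged into one kernel-verified Lean document; each statement's English description precedes it below -/
import Mathlib

section
/- Let C ⊆ ℝ² be the simple closed curve obtained from the unit circle by removing the open arc determined by central angles 5π/4 and 7π/4 (i.e. {(cos θ, sin θ) : 5π/4 < θ < 7π/4}) and replacing it by the semicircle {(x, √(1/2 − x²) − 1/√2) : −1/√2 ≤ x ≤ 1/√2}. Then C has exactly two inscribed squares. -/
open Complex Real Set

/-- A set `S ⊆ ℂ` is a square if it consists of the four points
`p, p + w, p + w + i·w, p + i·w` for some `p` and some `w ≠ 0`. -/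
def IsSquarePts (S : Set ℂ) : Prop :=
  ∃ p w : ℂ, w ≠ 0 ∧ S = {p, p + w, p + w + Complex.I * w, p + Complex.I * w}

/-- The collection of squares inscribed in a set `C ⊆ ℂ`. -/
def InscribedSquares (C : Set ℂ) : Set (Set ℂ) :=
  {S | IsSquarePts S ∧ S ⊆ C}

/-!
Write a square as `centeredSquare c u`: center `c`, vertices `c + Iᵏ u`, so that replacing `u` by
`I * u` only relabels the vertices. The curve is the set of points of `normSq z = 1` or
`normSq (z + κ I) = κ²` (with `κ = 1/√2`) having `Im z ≥ -κ`; a point of the small circle off the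
unit circle lies strictly above the line `Im z = -κ`. The only point equidistant from three
vertices of a square is its center. Up to rotation, the vertices on the unit circle form one of
four patterns:
* three on the unit circle: the center is `0`, and the height constraint leaves the axis-parallel
  square `circleSquare`;
* three on the small circle: the center is `-κ I`, so two opposite vertices cannot both lie strictly
  above it;
* two opposite vertices on each circle: the center again has height `-κ`, impossible as before;
* two adjacent vertices on each circle: the square is symmetric about the imaginary axis, and the
  cosine `c` of the angle of a lower vertex seen from `-κ I` satisfies
  `(c + 1) (8c³ + 4c² - 3c - 1) = 0`; the side conditions select the root `cStar ∈ (-1, -1/2)`,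
  giving `mixedSquare`.
-/

def centeredSquare (c u : ℂ) : Set ℂ := {c + u, c + I * u, c - u, c - I * u}

lemma Complex.I_mul_I_mul (u : ℂ) : I * (I * u) = -u := by
  rw [← mul_assoc, I_mul_I, neg_one_mul]

lemma Complex.normSq_eq_one_iff {z : ℂ} : normSq z = 1 ↔ ‖z‖ = 1 := by
  rw [normSq_eq_norm_sq, pow_eq_one_iff_of_nonneg (norm_nonneg z) two_ne_zero]

lemma centeredSquare_mul_I (c u : ℂ) : centeredSquare c (I * u) = centeredSquare c u := by
  ext z
  simp only [centeredSquare, mem_insert_iff, mem_singleton_iff, I_mul_I_mul, ← sub_eq_add_neg,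
    sub_neg_eq_add]
  tauto

lemma centeredSquare_neg (c u : ℂ) : centeredSquare c (-u) = centeredSquare c u := by
  rw [← I_mul_I_mul, centeredSquare_mul_I, centeredSquare_mul_I]

lemma isSquarePts_iff_exists_centeredSquare {S : Set ℂ} :
    IsSquarePts S ↔ ∃ c u, u ≠ 0 ∧ S = centeredSquare c u := by
  constructor
  · rintro ⟨p, w, hw, rfl⟩
    refine ⟨p + (1 + I) * w / 2, -((1 + I) * w / 2), ?_, ?_⟩
    · have : 1 + I ≠ 0 := by simp [Complex.ext_iff]
      simpa [this] using hw
    · rw [centeredSquare]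
      refine congrArg₂ _ ?_ (congrArg₂ _ ?_ (congrArg₂ _ ?_ (congrArg _ ?_)))
      · ring
      · linear_combination w / 2 * I_sq
      · ring
      · linear_combination -w / 2 * I_sq
  · rintro ⟨c, u, hu, rfl⟩
    refine ⟨c + u, (I - 1) * u, mul_ne_zero (by simp [sub_eq_zero, Complex.ext_iff]) hu, ?_⟩
    rw [centeredSquare]
    refine congrArg₂ _ ?_ (congrArg₂ _ ?_ (congrArg₂ _ ?_ (congrArg _ ?_)))
    · ring
    · ring
    · linear_combination -u * I_sq
    · linear_combination -u * I_sq

lemma eq_zero_of_normSq_centeredSquare_eq {c u : ℂ} (hu : u ≠ 0)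
    (h₁ : normSq (c + u) = normSq (c + I * u)) (h₂ : normSq (c + u) = normSq (c - u)) :
    c = 0 := by
  have hn : normSq u ≠ 0 := normSq_eq_zero.not.2 hu
  simp only [normSq_apply, add_re, add_im, sub_re, sub_im, mul_re, mul_im, I_re, I_im] at h₁ h₂ hn
  -- `h₂` and `h₁` say that `c * conj u` has zero real part and zero imaginary part
  have hre : c.re * (u.re * u.re + u.im * u.im) = 0 := by
    linear_combination (u.re / 4 - u.im / 4) * h₂ + u.im / 2 * h₁
  have him : c.im * (u.re * u.re + u.im * u.im) = 0 := by
    linear_combination (u.im / 4 + u.re / 4) * h₂ - u.re / 2 * h₁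
  exact Complex.ext ((mul_eq_zero.1 hre).resolve_right hn) ((mul_eq_zero.1 him).resolve_right hn)

def VertexPattern (p₀ p₁ p₂ p₃ : Prop) : Prop :=
  (p₀ ∧ p₁ ∧ p₂) ∨ (¬p₀ ∧ ¬p₁ ∧ ¬p₂) ∨ (¬p₀ ∧ ¬p₁ ∧ p₂ ∧ p₃) ∨ (¬p₀ ∧ p₁ ∧ ¬p₂ ∧ p₃)

lemma vertexPattern_rotate (p₀ p₁ p₂ p₃ : Prop) :
    VertexPattern p₀ p₁ p₂ p₃ ∨ VertexPattern p₁ p₂ p₃ p₀ ∨ VertexPattern p₂ p₃ p₀ p₁ ∨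
      VertexPattern p₃ p₀ p₁ p₂ := by
  unfold VertexPattern
  by_cases p₀ <;> by_cases p₁ <;> by_cases p₂ <;> by_cases p₃ <;>
    simp only [*, not_true, not_false_eq_true, and_true, and_false, or_false, or_true]

lemma exists_rotation_vertexPattern (P : ℂ → Prop) (c : ℂ) {u : ℂ} (hu : u ≠ 0) :
    ∃ w ≠ 0, centeredSquare c w = centeredSquare c u ∧
      VertexPattern (P (c + w)) (P (c + I * w)) (P (c - w)) (P (c - I * w)) := by
  rcases vertexPattern_rotate (P (c + u)) (P (c + I * u)) (P (c - u)) (P (c - I * u)) with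
    h | h | h | h
  · exact ⟨u, hu, rfl, h⟩
  · refine ⟨I * u, mul_ne_zero I_ne_zero hu, centeredSquare_mul_I c u, ?_⟩
    simpa only [I_mul_I_mul, ← sub_eq_add_neg, sub_neg_eq_add] using h
  · refine ⟨-u, neg_ne_zero.2 hu, centeredSquare_neg c u, ?_⟩
    simpa only [mul_neg, ← sub_eq_add_neg, sub_neg_eq_add] using h
  · refine ⟨-(I * u), neg_ne_zero.2 (mul_ne_zero I_ne_zero hu),
      by rw [centeredSquare_neg, centeredSquare_mul_I], ?_⟩
    simpa only [mul_neg, I_mul_I_mul, neg_neg, ← sub_eq_add_neg, sub_neg_eq_add] using h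

namespace TwoSquareCurve

noncomputable def κ : ℝ := 1 / √2

lemma κ_pos : 0 < κ := by unfold κ; positivity

lemma κ_sq : κ ^ 2 = 1 / 2 := by
  rw [κ, div_pow, one_pow, sq_sqrt zero_le_two]

lemma κ_eq_cos_pi_div_four : κ = Real.cos (π / 4) := by
  rw [cos_pi_div_four, κ, eq_div_iff two_ne_zero, div_mul_eq_mul_div, one_mul,
    div_eq_iff (sqrt_ne_zero'.2 two_pos), mul_self_sqrt zero_le_two]

lemma sin_lt_neg_κ_iff {θ : ℝ} (h₁ : π ≤ θ) (h₂ : θ ≤ 2 * π) :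
    Real.sin θ < -κ ↔ 5 * π / 4 < θ ∧ θ < 7 * π / 4 := by
  have hsin : Real.sin θ = -Real.cos |θ - 3 * π / 2| := by
    rw [Real.cos_abs, show θ - 3 * π / 2 = θ - π - π / 2 by ring, Real.cos_sub_pi_div_two,
      Real.sin_sub_pi, neg_neg]
  have hpi := pi_pos
  rw [hsin, κ_eq_cos_pi_div_four, neg_lt_neg_iff,
    strictAntiOn_cos.lt_iff_gt ⟨by linarith, by linarith⟩
      ⟨abs_nonneg _, abs_le.2 ⟨by linarith, by linarith⟩⟩, abs_lt]
  constructor <;> rintro ⟨h, h'⟩ <;> constructor <;> linarith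

lemma exists_arc_iff (z : ℂ) :
    (∃ θ : ℝ, 5 * π / 4 < θ ∧ θ < 7 * π / 4 ∧ z = exp (θ * I)) ↔
      normSq z = 1 ∧ z.im < -κ := by
  have hpi := pi_pos
  constructor
  · rintro ⟨θ, h₁, h₂, rfl⟩
    refine ⟨normSq_eq_one_iff.2 (norm_exp_ofReal_mul_I θ), ?_⟩
    rw [exp_ofReal_mul_I_im]
    exact (sin_lt_neg_κ_iff (by linarith) (by linarith)).2 ⟨h₁, h₂⟩
  · rintro ⟨hz, him⟩
    have hnorm := normSq_eq_one_iff.1 hz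
    have harg : arg z < 0 := arg_neg_iff.2 (him.trans (neg_neg_iff_pos.2 κ_pos))
    have hsin : Real.sin (arg z + 2 * π) < -κ := by
      rwa [Real.sin_add_two_pi, sin_arg, hnorm, div_one]
    obtain ⟨h₁, h₂⟩ := (sin_lt_neg_κ_iff (by linarith [neg_pi_lt_arg z]) (by linarith)).1 hsin
    refine ⟨arg z + 2 * π, h₁, h₂, ?_⟩
    rw [ofReal_add, add_mul, Complex.exp_add, ofReal_mul, ofReal_ofNat, exp_two_pi_mul_I, mul_one]
    simpa [hnorm] using (norm_mul_exp_arg_mul_I z).symm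

lemma exists_semicircle_iff (z : ℂ) :
    (∃ x : ℝ, -κ ≤ x ∧ x ≤ κ ∧ z = x + (√(1 / 2 - x ^ 2) - κ : ℝ) * I) ↔
      normSq (z + κ * I) = 1 / 2 ∧ -κ ≤ z.im := by
  have hκ := κ_pos
  have hκ₂ := κ_sq
  constructor
  · rintro ⟨x, h₁, h₂, rfl⟩
    have hx : 0 ≤ 1 / 2 - x ^ 2 := by nlinarith
    have hsq := sq_sqrt hx
    have hnn := sqrt_nonneg (1 / 2 - x ^ 2)
    simp only [normSq_apply, add_re, add_im, mul_re, mul_im, ofReal_re, ofReal_im, I_re, I_im]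
    constructor <;> nlinarith
  · rintro ⟨hz, him⟩
    simp only [normSq_apply, add_re, add_im, mul_re, mul_im, ofReal_re, ofReal_im, I_re, I_im]
      at hz
    have hre : z.re ^ 2 ≤ κ ^ 2 := by nlinarith
    have hsq : 1 / 2 - z.re ^ 2 = (z.im + κ) ^ 2 := by nlinarith
    obtain ⟨h₁, h₂⟩ := abs_le_of_sq_le_sq' hre hκ.le
    refine ⟨z.re, h₁, h₂, Complex.ext (by simp) ?_⟩
    simp only [add_im, ofReal_im, mul_im, ofReal_re, I_re, I_im, mul_zero, mul_one, zero_add]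
    rw [hsq, sqrt_sq (by linarith)]
    ring

def curve : Set ℂ := {z | (normSq z = 1 ∨ normSq (z + κ * I) = 1 / 2) ∧ -κ ≤ z.im}

lemma curve_eq :
    ({z : ℂ | ‖z‖ = 1} \
        {z : ℂ | ∃ θ : ℝ, 5 * π / 4 < θ ∧ θ < 7 * π / 4 ∧
          z = Complex.exp (θ * Complex.I)}) ∪
       {z : ℂ | ∃ x : ℝ, -(1 / Real.sqrt 2) ≤ x ∧ x ≤ 1 / Real.sqrt 2 ∧
          z = (x : ℂ) +
            (Real.sqrt (1 / 2 - x ^ 2) - 1 / Real.sqrt 2 : ℝ) * Complex.I} = curve := by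
  change _ ∪ {z : ℂ | ∃ x : ℝ, -κ ≤ x ∧ x ≤ κ ∧ z = x + (√(1 / 2 - x ^ 2) - κ : ℝ) * I} = _
  ext z
  simp only [curve, mem_union, mem_sdiff, mem_ofPred_eq, exists_arc_iff, exists_semicircle_iff,
    ← normSq_eq_one_iff, not_and, not_lt]
  tauto

lemma exists_cubic_root_mem_Icc :
    ∃ c ∈ Icc (-(4 : ℝ) / 5) (-7 / 10), 8 * c ^ 3 + 4 * c ^ 2 - 3 * c - 1 = 0 := by
  have hcont : ContinuousOn (fun c : ℝ => 8 * c ^ 3 + 4 * c ^ 2 - 3 * c - 1)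
      (Icc (-(4 : ℝ) / 5) (-7 / 10)) := by fun_prop
  exact intermediate_value_Icc (by norm_num) hcont ⟨by norm_num, by norm_num⟩

noncomputable def cStar : ℝ := exists_cubic_root_mem_Icc.choose

lemma cStar_mem : cStar ∈ Icc (-(4 : ℝ) / 5) (-7 / 10) := exists_cubic_root_mem_Icc.choose_spec.1

lemma cStar_root : 8 * cStar ^ 3 + 4 * cStar ^ 2 - 3 * cStar - 1 = 0 :=
  exists_cubic_root_mem_Icc.choose_spec.2

lemma mem_Icc_of_cubic_eq_zero {c : ℝ} (h₁ : -1 < c) (h₂ : c < -1 / 2)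
    (hc : 8 * c ^ 3 + 4 * c ^ 2 - 3 * c - 1 = 0) : c ∈ Icc (-(4 : ℝ) / 5) (-7 / 10) := by
  constructor
  · by_contra! hlt
    have h1 : 0 < -c - 4 / 5 := by linarith
    have h2 : 0 < 8 * c ^ 2 - 12 / 5 * c - 27 / 25 := by nlinarith
    nlinarith [mul_pos h1 h2]
  · by_contra! hlt
    have hx : 0 < -c - 1 / 2 := by linarith
    have hx5 : -c - 1 / 2 < 1 / 5 := by linarith
    rcases le_or_gt (8 * c ^ 2 - 3) 0 with hy | hy
    · nlinarith [mul_nonneg hx.le (neg_nonneg.2 hy)]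
    · have hyb : 8 * c ^ 2 - 3 < 23 / 25 := by nlinarith
      nlinarith [mul_pos hx hy, mul_lt_mul_of_pos_left hyb hx, mul_lt_mul_of_pos_right hx5 hy]

lemma eq_cStar_of_cubic_eq_zero {c : ℝ} (h₁ : -1 < c) (h₂ : c < -1 / 2)
    (hc : 8 * c ^ 3 + 4 * c ^ 2 - 3 * c - 1 = 0) : c = cStar := by
  obtain ⟨hlo, hhi⟩ := mem_Icc_of_cubic_eq_zero h₁ h₂ hc
  obtain ⟨hlo', hhi'⟩ := cStar_mem
  have hfac : (c - cStar) * (8 * (c ^ 2 + c * cStar + cStar ^ 2) + 4 * (c + cStar) - 3) = 0 := by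
    linear_combination hc - cStar_root
  have hpos : 0 < 8 * (c ^ 2 + c * cStar + cStar ^ 2) + 4 * (c + cStar) - 3 := by
    nlinarith [mul_nonneg (by linarith : (0 : ℝ) ≤ -c - 7 / 10)
      (by linarith : (0 : ℝ) ≤ -cStar - 7 / 10)]
  exact sub_eq_zero.1 ((mul_eq_zero.1 hfac).resolve_right hpos.ne')

noncomputable def sStar : ℝ := √(1 - cStar ^ 2)

lemma sStar_sq : sStar ^ 2 = 1 - cStar ^ 2 := by
  obtain ⟨hlo, hhi⟩ := cStar_mem
  exact sq_sqrt (by nlinarith)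

lemma sStar_pos : 0 < sStar := by
  obtain ⟨hlo, hhi⟩ := cStar_mem
  exact sqrt_pos.2 (by nlinarith)

lemma sStar_mul : sStar * (2 * cStar + 1) = 2 * cStar * (cStar + 1) := by
  obtain ⟨hlo, hhi⟩ := cStar_mem
  have h₁ : (sStar * (2 * cStar + 1)) ^ 2 = (2 * cStar * (cStar + 1)) ^ 2 := by
    linear_combination (2 * cStar + 1) ^ 2 * sStar_sq - (cStar + 1) * cStar_root
  have h₂ : sStar * (2 * cStar + 1) < 0 := mul_neg_of_pos_of_neg sStar_pos (by linarith)
  have h₃ : 2 * cStar * (cStar + 1) < 0 := by nlinarith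
  nlinarith

lemma eq_cStar_and_eq_sStar {c s : ℝ} (hcs : c ^ 2 + s ^ 2 = 1)
    (hrel : s * (2 * c + 1) = 2 * c * (c + 1)) (hs : 0 < s) (h2c : 2 * c ≤ s) :
    c = cStar ∧ s = sStar := by
  have hc₁ : -1 < c := by nlinarith
  have hc₂ : c < -1 / 2 := by
    by_contra! hc
    rcases le_or_gt c 0 with h0 | h0
    · nlinarith [mul_nonneg hs.le (by linarith : (0 : ℝ) ≤ 2 * c + 1)]
    · nlinarith [mul_pos h0 (by linarith : (0 : ℝ) < 2 * c + 1)]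
  have hcubic : 8 * c ^ 3 + 4 * c ^ 2 - 3 * c - 1 = 0 := by
    have h : (c + 1) * (8 * c ^ 3 + 4 * c ^ 2 - 3 * c - 1) = 0 := by
      linear_combination (2 * c + 1) ^ 2 * hcs - (s * (2 * c + 1) + 2 * c * (c + 1)) * hrel
    exact (mul_eq_zero.1 h).resolve_left (by linarith)
  obtain rfl := eq_cStar_of_cubic_eq_zero hc₁ hc₂ hcubic
  refine ⟨rfl, ?_⟩
  have h : s ^ 2 = sStar ^ 2 := by rw [sStar_sq]; linarith
  nlinarith [sStar_pos]

lemma mem_curve_of_normSq_ne_one {z : ℂ} (hz : z ∈ curve) (h : normSq z ≠ 1) :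
    normSq (z + κ * I) = 1 / 2 ∧ -κ < z.im := by
  have hK := hz.1.resolve_left h
  refine ⟨hK, lt_of_le_of_ne hz.2 fun him => h ?_⟩
  simp only [normSq_apply, add_re, add_im, mul_re, mul_im, ofReal_re, ofReal_im, I_re, I_im]
    at hK ⊢
  nlinarith [κ_sq]

noncomputable def circleSquare : Set ℂ := centeredSquare 0 (κ + κ * I)

noncomputable def mixedSquare : Set ℂ :=
  centeredSquare ((κ * (sStar - 1 - cStar) : ℝ) * I) ((κ * cStar : ℝ) * (1 + I))

lemma centeredSquare_eq_circleSquare {c u : ℂ} (hu : u ≠ 0) (h : centeredSquare c u ⊆ curve)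
    (h₀ : normSq (c + u) = 1) (h₁ : normSq (c + I * u) = 1) (h₂ : normSq (c - u) = 1) :
    centeredSquare c u = circleSquare := by
  obtain rfl : c = 0 :=
    eq_zero_of_normSq_centeredSquare_eq hu (h₀.trans h₁.symm) (h₀.trans h₂.symm)
  simp only [centeredSquare, insert_subset_iff, singleton_subset_iff, curve, mem_ofPred_eq,
    zero_add, zero_sub, neg_im, mul_im, I_re, I_im, zero_mul, one_mul] at h
  have hn : u.re ^ 2 + u.im ^ 2 = 1 := by simpa [normSq_apply, sq] using h₀
  obtain ⟨⟨-, hi₀⟩, ⟨-, hr₀⟩, ⟨-, hi₁⟩, ⟨-, hr₁⟩⟩ := h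
  have hκ := κ_sq
  have hre : u.re ^ 2 = κ ^ 2 := by
    nlinarith [sq_le_sq' hr₀ (neg_le_neg_iff.1 hr₁), sq_le_sq' hi₀ (neg_le_neg_iff.1 hi₁)]
  have him : u.im ^ 2 = κ ^ 2 := by linarith
  have key : u = κ + κ * I ∨ u = I * (κ + κ * I) ∨ u = -(κ + κ * I) ∨
      u = -(I * (κ + κ * I)) := by
    rcases sq_eq_sq_iff_eq_or_eq_neg.1 hre with hr | hr <;>
      rcases sq_eq_sq_iff_eq_or_eq_neg.1 him with hi | hi
    · left; apply Complex.ext <;> simp [hr, hi]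
    · right; right; right; apply Complex.ext <;> simp [hr, hi]
    · right; left; apply Complex.ext <;> simp [hr, hi]
    · right; right; left; apply Complex.ext <;> simp [hr, hi]
  rcases key with rfl | rfl | rfl | rfl
  · rfl
  · exact centeredSquare_mul_I _ _
  · exact centeredSquare_neg _ _
  · rw [centeredSquare_neg, centeredSquare_mul_I]; rfl

lemma not_three_on_semicircle {c u : ℂ} (hu : u ≠ 0) (h : centeredSquare c u ⊆ curve)
    (h₀ : normSq (c + u) ≠ 1) (h₁ : normSq (c + I * u) ≠ 1) (h₂ : normSq (c - u) ≠ 1) :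
    False := by
  simp only [centeredSquare, insert_subset_iff, singleton_subset_iff] at h
  obtain ⟨k₀, s₀⟩ := mem_curve_of_normSq_ne_one h.1 h₀
  obtain ⟨k₁, -⟩ := mem_curve_of_normSq_ne_one h.2.1 h₁
  obtain ⟨k₂, s₂⟩ := mem_curve_of_normSq_ne_one h.2.2.1 h₂
  rw [add_right_comm] at k₀ k₁
  rw [sub_add_eq_add_sub] at k₂
  have hc := congrArg im
    (eq_zero_of_normSq_centeredSquare_eq hu (k₀.trans k₁.symm) (k₀.trans k₂.symm))
  simp only [add_im, sub_im, mul_im, ofReal_re, ofReal_im, I_re, I_im, zero_im, mul_one,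
    mul_zero, add_zero] at hc s₀ s₂
  linarith

lemma not_diagonal_on_semicircle {c u : ℂ} (h : centeredSquare c u ⊆ curve)
    (h₀ : normSq (c + u) ≠ 1) (h₁ : normSq (c + I * u) = 1) (h₂ : normSq (c - u) ≠ 1)
    (h₃ : normSq (c - I * u) = 1) : False := by
  simp only [centeredSquare, insert_subset_iff, singleton_subset_iff] at h
  obtain ⟨k₀, s₀⟩ := mem_curve_of_normSq_ne_one h.1 h₀
  obtain ⟨k₂, s₂⟩ := mem_curve_of_normSq_ne_one h.2.2.1 h₂
  simp only [normSq_apply, add_re, add_im, sub_re, sub_im, mul_re, mul_im, ofReal_re, ofReal_im,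
    I_re, I_im] at k₀ k₂ h₁ h₃ s₀ s₂
  have hκ := κ_pos
  have key : κ * (c.im + κ) = 0 := by
    linear_combination (k₀ + k₂ - h₁ - h₃) / 4 + κ_sq / 2
  have := (mul_eq_zero.1 key).resolve_left hκ.ne'
  linarith

lemma centeredSquare_eq_mixedSquare {c u : ℂ} (hu : u ≠ 0) (h : centeredSquare c u ⊆ curve)
    (h₀ : normSq (c + u) ≠ 1) (h₁ : normSq (c + I * u) ≠ 1) (h₂ : normSq (c - u) = 1)
    (h₃ : normSq (c - I * u) = 1) : centeredSquare c u = mixedSquare := by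
  simp only [centeredSquare, insert_subset_iff, singleton_subset_iff] at h
  obtain ⟨k₀, s₀⟩ := mem_curve_of_normSq_ne_one h.1 h₀
  obtain ⟨k₁, -⟩ := mem_curve_of_normSq_ne_one h.2.1 h₁
  have s₃ := h.2.2.2.2
  obtain ⟨x, y⟩ := c
  obtain ⟨a, b⟩ := u
  simp only [normSq_apply, add_re, add_im, sub_re, sub_im, mul_re, mul_im, ofReal_re, ofReal_im,
    I_re, I_im] at k₀ k₁ h₂ h₃ s₀ s₃
  have hκ := κ_pos
  have hab : κ * (a - b) = 0 := by linear_combination -(k₀ - k₁ + h₂ - h₃) / 2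
  obtain rfl : b = a := (sub_eq_zero.1 ((mul_eq_zero.1 hab).resolve_left hκ.ne')).symm
  have ha : b ≠ 0 := fun ha => hu (by simp [Complex.ext_iff, ha])
  have hax : b * x = 0 := by linear_combination (k₀ - k₁) / 4
  obtain rfl : x = 0 := (mul_eq_zero.1 hax).resolve_left ha
  -- `(2κb, 2κ(y + b + κ))` is the unit vector from `-κ I` towards the vertex `c + u`
  obtain ⟨hC, hS⟩ := eq_cStar_and_eq_sStar (c := 2 * κ * b) (s := 2 * κ * (y + b + κ))
    (by linear_combination 4 * κ ^ 2 * k₀ + 2 * κ_sq)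
    (by linear_combination 2 * κ ^ 2 * k₀ - 2 * κ ^ 2 * h₂
      + 2 * (4 * κ * b - 2 * κ * (y + b) - κ ^ 2) * κ_sq)
    (by nlinarith) (by nlinarith)
  have hb : b = κ * cStar := by linear_combination κ * hC - 2 * b * κ_sq
  have hy : y = κ * (sStar - 1 - cStar) := by
    linear_combination κ * hS - 2 * (y + b + κ) * κ_sq - hb
  unfold mixedSquare
  congr 1 <;> apply Complex.ext <;> simp [hb, hy]

lemma eq_circleSquare_or_eq_mixedSquare {c u : ℂ} (hu : u ≠ 0)
    (h : centeredSquare c u ⊆ curve) :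
    centeredSquare c u = circleSquare ∨ centeredSquare c u = mixedSquare := by
  obtain ⟨w, hw, hsq, hpat⟩ := exists_rotation_vertexPattern (fun z => normSq z = 1) c hu
  rw [← hsq] at h ⊢
  rcases hpat with ⟨h₀, h₁, h₂⟩ | ⟨h₀, h₁, h₂⟩ | ⟨h₀, h₁, h₂, h₃⟩ | ⟨h₀, h₁, h₂, h₃⟩
  · exact Or.inl (centeredSquare_eq_circleSquare hw h h₀ h₁ h₂)
  · exact (not_three_on_semicircle hw h h₀ h₁ h₂).elim
  · exact Or.inr (centeredSquare_eq_mixedSquare hw h h₀ h₁ h₂ h₃)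
  · exact (not_diagonal_on_semicircle h h₀ h₁ h₂ h₃).elim

lemma circleSquare_subset_curve : circleSquare ⊆ curve := by
  have hκ := κ_pos
  have hκ₂ := κ_sq
  simp only [circleSquare, centeredSquare, insert_subset_iff, singleton_subset_iff, curve,
    mem_ofPred_eq, normSq_apply, add_re, add_im, sub_re, sub_im, mul_re, mul_im, ofReal_re,
    ofReal_im, I_re, I_im, zero_re, zero_im]
  refine ⟨⟨Or.inl ?_, ?_⟩, ⟨Or.inl ?_, ?_⟩, ⟨Or.inl ?_, ?_⟩, ⟨Or.inl ?_, ?_⟩⟩ <;> nlinarith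

lemma mixedSquare_subset_curve : mixedSquare ⊆ curve := by
  have hκ := κ_pos
  have hκ₂ := κ_sq
  have hs := sStar_pos
  have hc : 0 < -cStar := by linarith [cStar_mem.2]
  simp only [mixedSquare, centeredSquare, insert_subset_iff, singleton_subset_iff, curve,
    mem_ofPred_eq, normSq_apply, add_re, add_im, sub_re, sub_im, mul_re, mul_im, ofReal_re,
    ofReal_im, I_re, I_im, one_re, one_im]
  refine ⟨⟨Or.inr ?_, ?_⟩, ⟨Or.inr ?_, ?_⟩, ⟨Or.inl ?_, ?_⟩, ⟨Or.inl ?_, ?_⟩⟩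
  · linear_combination κ ^ 2 * sStar_sq + hκ₂
  · nlinarith [mul_pos hκ hs]
  · linear_combination κ ^ 2 * sStar_sq + hκ₂
  · nlinarith [mul_pos hκ hs]
  · linear_combination κ ^ 2 * sStar_sq + 2 * hκ₂ - 2 * κ ^ 2 * sStar_mul
  · nlinarith [mul_pos hκ hs, mul_pos hκ hc]
  · linear_combination κ ^ 2 * sStar_sq + 2 * hκ₂ - 2 * κ ^ 2 * sStar_mul
  · nlinarith [mul_pos hκ hs, mul_pos hκ hc]

lemma circleSquare_ne_mixedSquare : circleSquare ≠ mixedSquare := by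
  intro h
  have hmem : (κ + κ * I : ℂ) ∈ mixedSquare := by
    rw [← h]
    simp [circleSquare, centeredSquare]
  have hκ := κ_pos
  obtain ⟨hlo, hhi⟩ := cStar_mem
  simp only [mixedSquare, centeredSquare, mem_insert_iff, mem_singleton_iff, Complex.ext_iff,
    add_re, add_im, sub_re, mul_re, mul_im, ofReal_re, ofReal_im, I_re, I_im, one_re,
    one_im] at hmem
  rcases hmem with ⟨h, -⟩ | ⟨h, -⟩ | ⟨h, -⟩ | ⟨h, -⟩ <;> nlinarith

lemma inscribedSquares_curve : InscribedSquares curve = {circleSquare, mixedSquare} := by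
  ext S
  simp only [InscribedSquares, mem_ofPred_eq, mem_insert_iff, mem_singleton_iff,
    isSquarePts_iff_exists_centeredSquare]
  constructor
  · rintro ⟨⟨c, u, hu, rfl⟩, h⟩
    exact eq_circleSquare_or_eq_mixedSquare hu h
  · rintro (rfl | rfl)
    · exact ⟨⟨0, _, by simp [Complex.ext_iff, κ_pos.ne'], rfl⟩, circleSquare_subset_curve⟩
    · refine ⟨⟨_, _, ?_, rfl⟩, mixedSquare_subset_curve⟩
      have : cStar ≠ 0 := by linarith [cStar_mem.2]
      simp [Complex.ext_iff, κ_pos.ne', this]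

end TwoSquareCurve

/-- The curve obtained from the unit circle by removing the open arc between
central angles `5π/4` and `7π/4` and replacing it with the semicircle
`y = √(1/2 − x²) − 1/√2`, `−1/√2 ≤ x ≤ 1/√2`, has exactly two inscribed
squares. -/
theorem curve_with_exactly_two_inscribed_squares :
    (InscribedSquares
      (({z : ℂ | ‖z‖ = 1} \
        {z : ℂ | ∃ θ : ℝ, 5 * π / 4 < θ ∧ θ < 7 * π / 4 ∧
          z = Complex.exp (θ * Complex.I)}) ∪
       {z : ℂ | ∃ x : ℝ, -(1 / Real.sqrt 2) ≤ x ∧ x ≤ 1 / Real.sqrt 2 ∧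
          z = (x : ℂ) +
            (Real.sqrt (1 / 2 - x ^ 2) - 1 / Real.sqrt 2 : ℝ) * Complex.I})).ncard
      = 2 := by
  rw [TwoSquareCurve.curve_eq, TwoSquareCurve.inscribedSquares_curve]
  exact ncard_pair TwoSquareCurve.circleSquare_ne_mixedSquare
end

section
/- For c > 0 define f_c : (−1/√2, 1/√2) → ℝ by f_c(x) = −√(1 − x²) + c·exp(−(0.02/(x + 1/√2)² + 0.02/(x − 1/√2)²)), and for each c let N(c) = {x : 0 < x < 1/√2 and f_c(x) = √(1 − x²) − 2x}. Then there exists c₁ > 0 such that N(c₁) is empty (for small c the graph does not meet the side of the triangle y = √(1 − x²) − 2x except at the endpoint), and there exists c₂ > c₁ such that N(c₂) contains at least two points. -/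
open Real Set

noncomputable def Aexp (x : ℝ) : ℝ :=
  0.02 / (x + 1 / Real.sqrt 2) ^ 2 + 0.02 / (x - 1 / Real.sqrt 2) ^ 2

noncomputable def H (x : ℝ) : ℝ :=
  (2 * Real.sqrt (1 - x ^ 2) - 2 * x) * Real.exp (Aexp x)

lemma s_sq : (1 / Real.sqrt 2) ^ 2 = 1 / 2 := by
  rw [div_pow, one_pow, Real.sq_sqrt] <;> norm_num

lemma s_pos : 0 < 1 / Real.sqrt 2 := by positivity

lemma s_lb : (0.705 : ℝ) ≤ 1 / Real.sqrt 2 := by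
  nlinarith [s_sq, s_pos]

lemma s_ub : (1 / Real.sqrt 2 : ℝ) ≤ 0.708 := by
  nlinarith [s_sq, s_pos]

lemma Aexp_nonneg (x : ℝ) : 0 ≤ Aexp x := by
  unfold Aexp; positivity

lemma H_ge (x : ℝ) (hx0 : 0 ≤ x) (hx1 : x < 1 / Real.sqrt 2) :
    (1 / Real.sqrt 2 - x) * Real.exp (0.02 / (x - 1 / Real.sqrt 2) ^ 2) ≤ H x := by
  set s := 1 / Real.sqrt 2 with hs
  have hx2 : x ^ 2 < 1 / 2 := by nlinarith [s_sq, s_pos]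
  have hu0 : 0 ≤ Real.sqrt (1 - x ^ 2) := Real.sqrt_nonneg _
  have hu2 : (Real.sqrt (1 - x ^ 2)) ^ 2 = 1 - x ^ 2 := Real.sq_sqrt (by nlinarith)
  have hu1 : Real.sqrt (1 - x ^ 2) ≤ 1 := Real.sqrt_le_one.mpr (by nlinarith)
  have hux : x ≤ Real.sqrt (1 - x ^ 2) := by nlinarith
  have hN : s - x ≤ 2 * Real.sqrt (1 - x ^ 2) - 2 * x := by
    nlinarith [s_sq, s_lb]
  have hA : 0.02 / (x - s) ^ 2 ≤ Aexp x := by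
    unfold Aexp
    have : (0:ℝ) ≤ 0.02 / (x + s) ^ 2 := by positivity
    linarith
  have hE : Real.exp (0.02 / (x - s) ^ 2) ≤ Real.exp (Aexp x) := Real.exp_le_exp.mpr hA
  unfold H
  exact mul_le_mul hN hE (le_of_lt (Real.exp_pos _)) (by linarith)

lemma H_lb (x : ℝ) (hx0 : 0 ≤ x) (hx1 : x < 1 / Real.sqrt 2) : 1 / 50 ≤ H x := by
  set s := 1 / Real.sqrt 2 with hs
  have h := H_ge x hx0 hx1
  set t := s - x with ht
  have ht0 : 0 < t := by linarith
  have hsq : (x - s) ^ 2 = t ^ 2 := by ring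
  rw [hsq] at h
  rcases le_or_gt (1/50 : ℝ) t with hc | hc
  · have h1 : (1:ℝ) ≤ Real.exp (0.02 / t ^ 2) := Real.one_le_exp (by positivity)
    nlinarith [Real.exp_pos (0.02 / t ^ 2)]
  · have h1 : 0.02 / t ^ 2 + 1 ≤ Real.exp (0.02 / t ^ 2) := Real.add_one_le_exp _
    have h2 : 0.02 / t ≤ t * Real.exp (0.02 / t ^ 2) := by
      have : t * (0.02 / t ^ 2) = 0.02 / t := by field_simp
      nlinarith
    have h3 : (1:ℝ) ≤ 0.02 / t := by
      rw [le_div_iff₀ ht0]; linarith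
    linarith

lemma H_cont : ContinuousOn H (Set.Icc (1/10 : ℝ) (1 / Real.sqrt 2 - 1/100)) := by
  unfold H Aexp
  apply ContinuousOn.mul
  · exact (by fun_prop : Continuous fun x : ℝ => 2 * Real.sqrt (1 - x ^ 2) - 2 * x).continuousOn
  · apply Real.continuous_exp.comp_continuousOn
    apply ContinuousOn.add
    · apply ContinuousOn.div continuousOn_const (by fun_prop)
      intro x hx
      have h1 : (0:ℝ) < x + 1 / Real.sqrt 2 := by
        have := hx.1; have := s_pos; simp at *; linarith
      positivity
    · apply ContinuousOn.div continuousOn_const (by fun_prop)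
      intro x hx
      have h1 : x - 1 / Real.sqrt 2 < 0 := by
        have := hx.2; simp at *; linarith
      have : x - 1 / Real.sqrt 2 ≠ 0 := ne_of_lt h1
      positivity

lemma H_at_tenth : (1.78 : ℝ) ≤ H (1/10) := by
  have hu0 : 0 ≤ Real.sqrt (1 - (1/10:ℝ) ^ 2) := Real.sqrt_nonneg _
  have hu2 : (Real.sqrt (1 - (1/10:ℝ) ^ 2)) ^ 2 = 1 - (1/10:ℝ) ^ 2 :=
    Real.sq_sqrt (by norm_num)
  have hN : (1.78 : ℝ) ≤ 2 * Real.sqrt (1 - (1/10:ℝ) ^ 2) - 2 * (1/10) := by nlinarith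
  have hE : (1:ℝ) ≤ Real.exp (Aexp (1/10)) := Real.one_le_exp (Aexp_nonneg _)
  unfold H
  nlinarith [Real.exp_pos (Aexp (1/10))]

lemma exp_half_lt_two : Real.exp (1/2 : ℝ) < 2 := by
  have h1 : Real.exp (1/2 : ℝ) * Real.exp (1/2 : ℝ) = Real.exp 1 := by
    rw [← Real.exp_add]; norm_num
  have h2 := Real.exp_one_lt_d9
  nlinarith [Real.exp_pos (1/2 : ℝ)]

lemma H_at_half : H (1/2) ≤ 1.48 := by
  have hu0 : 0 ≤ Real.sqrt (1 - (1/2:ℝ) ^ 2) := Real.sqrt_nonneg _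
  have hu2 : (Real.sqrt (1 - (1/2:ℝ) ^ 2)) ^ 2 = 1 - (1/2:ℝ) ^ 2 :=
    Real.sq_sqrt (by norm_num)
  have hN : 2 * Real.sqrt (1 - (1/2:ℝ) ^ 2) - 2 * (1/2) ≤ 0.74 := by nlinarith
  have hN0 : 0 ≤ 2 * Real.sqrt (1 - (1/2:ℝ) ^ 2) - 2 * (1/2) := by nlinarith
  have hA : Aexp (1/2) ≤ 1/2 := by
    unfold Aexp
    have hs1 := s_lb
    have hs2 := s_ub
    have h1 : (1:ℝ) ≤ ((1:ℝ)/2 + 1 / Real.sqrt 2) ^ 2 := by nlinarith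
    have h2 : (0.042025:ℝ) ≤ ((1:ℝ)/2 - 1 / Real.sqrt 2) ^ 2 := by nlinarith
    have h3 : (0.02:ℝ) / ((1:ℝ)/2 + 1 / Real.sqrt 2) ^ 2 ≤ 0.02 := by
      rw [div_le_iff₀ (by nlinarith)]; nlinarith
    have h4 : (0.02:ℝ) / ((1:ℝ)/2 - 1 / Real.sqrt 2) ^ 2 ≤ 0.48 := by
      rw [div_le_iff₀ (by nlinarith)]; nlinarith
    linarith
  have hE : Real.exp (Aexp (1/2)) ≤ 2 :=
    le_trans (Real.exp_le_exp.mpr hA) (le_of_lt exp_half_lt_two)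
  unfold H
  calc (2 * Real.sqrt (1 - (1/2:ℝ) ^ 2) - 2 * (1/2)) * Real.exp (Aexp (1/2))
      ≤ 0.74 * 2 := mul_le_mul hN hE (le_of_lt (Real.exp_pos _)) (by norm_num)
    _ = 1.48 := by norm_num

lemma H_at_b : (2:ℝ) ≤ H (1 / Real.sqrt 2 - 1/100) := by
  have hb0 : (0:ℝ) ≤ 1 / Real.sqrt 2 - 1/100 := by have := s_lb; linarith
  have hb1 : 1 / Real.sqrt 2 - 1/100 < 1 / Real.sqrt 2 := by linarith
  have h := H_ge _ hb0 hb1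
  have h1 : (1 / Real.sqrt 2 - (1 / Real.sqrt 2 - 1/100)) = (1/100 : ℝ) := by ring
  have h2 : ((1 / Real.sqrt 2 - 1/100) - 1 / Real.sqrt 2) ^ 2 = (1/10000 : ℝ) := by ring
  rw [h1, h2] at h
  have h3 : (0.02 : ℝ) / (1/10000) = 200 := by norm_num
  rw [h3] at h
  have h4 : (200 : ℝ) + 1 ≤ Real.exp 200 := Real.add_one_le_exp _
  nlinarith

lemma key (f : ℝ → ℝ → ℝ)
    (hf : ∀ c x : ℝ, f c x =
      -Real.sqrt (1 - x ^ 2) +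
        c * Real.exp (-(0.02 / (x + 1 / Real.sqrt 2) ^ 2 +
                        0.02 / (x - 1 / Real.sqrt 2) ^ 2)))
    (c x : ℝ) :
    f c x = Real.sqrt (1 - x ^ 2) - 2 * x ↔ c = H x := by
  rw [hf]
  have hAeq : (0.02 / (x + 1 / Real.sqrt 2) ^ 2 +
      0.02 / (x - 1 / Real.sqrt 2) ^ 2) = Aexp x := rfl
  rw [hAeq]
  have hE : Real.exp (-(Aexp x)) * Real.exp (Aexp x) = 1 := by
    rw [← Real.exp_add]; simp
  unfold H
  constructor
  · intro h
    have h1 : c * Real.exp (-(Aexp x)) = 2 * Real.sqrt (1 - x ^ 2) - 2 * x := by linarith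
    calc c = c * (Real.exp (-(Aexp x)) * Real.exp (Aexp x)) := by rw [hE, mul_one]
      _ = (c * Real.exp (-(Aexp x))) * Real.exp (Aexp x) := by ring
      _ = (2 * Real.sqrt (1 - x ^ 2) - 2 * x) * Real.exp (Aexp x) := by rw [h1]
  · intro h
    rw [h]
    have h1 : ((2 * Real.sqrt (1 - x ^ 2) - 2 * x) * Real.exp (Aexp x)) *
        Real.exp (-(Aexp x)) = 2 * Real.sqrt (1 - x ^ 2) - 2 * x := by
      rw [mul_assoc, mul_comm (Real.exp (Aexp x)), hE, mul_one]
    linarith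

/-- With `f_c(x) = −√(1−x²) + c·exp(−(0.02/(x+1/√2)² + 0.02/(x−1/√2)²))` and
`N(c) = {x : 0 < x < 1/√2 ∧ f_c(x) = √(1−x²) − 2x}`: for some `c₁ > 0` the set
`N(c₁)` is empty, and for some `c₂ > c₁` the set `N(c₂)` has at least two
points. -/
theorem graph_triangle_intersections (f : ℝ → ℝ → ℝ)
    (hf : ∀ c x : ℝ, f c x =
      -Real.sqrt (1 - x ^ 2) +
        c * Real.exp (-(0.02 / (x + 1 / Real.sqrt 2) ^ 2 +
                        0.02 / (x - 1 / Real.sqrt 2) ^ 2))) :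
    ∃ c₁ : ℝ, 0 < c₁ ∧
      {x : ℝ | 0 < x ∧ x < 1 / Real.sqrt 2 ∧
        f c₁ x = Real.sqrt (1 - x ^ 2) - 2 * x} = ∅ ∧
      ∃ c₂ : ℝ, c₁ < c₂ ∧
        ∃ x y : ℝ,
          x ∈ {x : ℝ | 0 < x ∧ x < 1 / Real.sqrt 2 ∧
            f c₂ x = Real.sqrt (1 - x ^ 2) - 2 * x} ∧
          y ∈ {x : ℝ | 0 < x ∧ x < 1 / Real.sqrt 2 ∧
            f c₂ x = Real.sqrt (1 - x ^ 2) - 2 * x} ∧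
          x ≠ y := by
  refine ⟨1/100, by norm_num, ?_, ?_⟩
  · rw [Set.eq_empty_iff_forall_notMem]
    rintro x ⟨hx0, hx1, hx2⟩
    rw [key f hf] at hx2
    have := H_lb x (le_of_lt hx0) hx1
    rw [← hx2] at this
    norm_num at this
  · refine ⟨8/5, by norm_num, ?_⟩
    have hb : (1/2 : ℝ) ≤ 1 / Real.sqrt 2 - 1/100 := by have := s_lb; linarith
    have hsub1 : Set.Icc (1/10 : ℝ) (1/2) ⊆ Set.Icc (1/10 : ℝ) (1 / Real.sqrt 2 - 1/100) :=
      Set.Icc_subset_Icc le_rfl hb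
    have hsub2 : Set.Icc (1/2 : ℝ) (1 / Real.sqrt 2 - 1/100) ⊆
        Set.Icc (1/10 : ℝ) (1 / Real.sqrt 2 - 1/100) :=
      Set.Icc_subset_Icc (by norm_num) le_rfl
    have hmem1 : (8/5 : ℝ) ∈ Set.Icc (H (1/2)) (H (1/10)) :=
      ⟨by have := H_at_half; linarith, by have := H_at_tenth; linarith⟩
    obtain ⟨r₁, hr₁mem, hr₁⟩ := intermediate_value_Icc' (by norm_num : (1/10 : ℝ) ≤ 1/2)
      (H_cont.mono hsub1) hmem1
    have hmem2 : (8/5 : ℝ) ∈ Set.Icc (H (1/2)) (H (1 / Real.sqrt 2 - 1/100)) :=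
      ⟨by have := H_at_half; linarith, by have := H_at_b; linarith⟩
    obtain ⟨r₂, hr₂mem, hr₂⟩ := intermediate_value_Icc hb (H_cont.mono hsub2) hmem2
    have hr₁ne : r₁ ≠ 1/2 := by
      intro h; rw [h] at hr₁; have := H_at_half; rw [hr₁] at this; norm_num at this
    have hr₂ne : r₂ ≠ 1/2 := by
      intro h; rw [h] at hr₂; have := H_at_half; rw [hr₂] at this; norm_num at this
    have hr₁lt : r₁ < 1/2 := lt_of_le_of_ne hr₁mem.2 hr₁ne
    have hr₂gt : 1/2 < r₂ := lt_of_le_of_ne hr₂mem.1 (Ne.symm hr₂ne)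
    refine ⟨r₁, r₂, ⟨?_, ?_, ?_⟩, ⟨?_, ?_, ?_⟩, ?_⟩
    · have := hr₁mem.1; linarith
    · calc r₁ < 1/2 := hr₁lt
        _ ≤ 1 / Real.sqrt 2 - 1/100 := hb
        _ < 1 / Real.sqrt 2 := by linarith
    · exact (key f hf _ _).mpr hr₁.symm
    · linarith
    · calc r₂ ≤ 1 / Real.sqrt 2 - 1/100 := hr₂mem.2
        _ < 1 / Real.sqrt 2 := by linarith
    · exact (key f hf _ _).mpr hr₂.symm
    · exact ne_of_lt (lt_trans hr₁lt hr₂gt)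
end

section
/- For c > 0 define f_c : (−1/√2, 1/√2) → ℝ by f_c(x) = −√(1 − x²) + c·exp(−(0.02/(x + 1/√2)² + 0.02/(x − 1/√2)²)). There exists c > 0 (approximately 1.18264) such that the set {x : 0 < x < 1/√2 and f_c(x) = √(1 − x²) − 2x} has exactly one element; that is, for this value of c the graph of f_c meets the side y = √(1 − x²) − 2x of the triangle in a unique point apart from the endpoint. -/
/-!
The graph of `f_c` meets the side at `x` exactly when `c = level x := gap x · exp (barrier x)`,
where `gap x = 2 (√(1 - x²) - x)` is the vertical distance from the lower unit semicircle to the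
side and `barrier x = 0.02/(x + 1/√2)² + 0.02/(x - 1/√2)²`. Taking `c` to be the minimum of
`level` reduces uniqueness to `level` having a unique minimiser on `(0, 1/√2)`. Interval
estimates (Taylor bounds for `exp`, monotonicity of each term of `barrier` and its derivatives)
show that `level > 1.19` outside `[0.44, 0.62]`, that `level'' > 0` on `[0.44, 0.62]`, and that
the minimum on this window lies in `[1.182, 1.182667]`; a strictly convex function has at most
one minimiser.
-/

open Real Set

theorem HasDerivAt.const_div_pow {u : ℝ → ℝ} {u' x : ℝ} (c : ℝ) (n : ℕ)
    (hu : HasDerivAt u u' x) (hx : u x ≠ 0) :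
    HasDerivAt (fun y => c / u y ^ n) (-(n * c * u') / u x ^ (n + 1)) x := by
  refine ((hasDerivAt_const x c).div (hu.fun_pow n) (pow_ne_zero n hx)).congr_deriv ?_
  rcases n with _ | n
  · simp
  · rw [Nat.add_sub_cancel]
    field_simp
    push_cast
    ring

theorem HasDerivAt.mul_exp {u E : ℝ → ℝ} {u' E' x : ℝ} (hu : HasDerivAt u u' x)
    (hE : HasDerivAt E E' x) :
    HasDerivAt (fun y => u y * Real.exp (E y)) ((u' + u x * E') * Real.exp (E x)) x := by
  refine (hu.mul hE.exp).congr_deriv ?_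
  ring

theorem strictConvexOn_Icc_of_hasDerivAt_two_pos {f f' f'' : ℝ → ℝ} {a b : ℝ}
    (hf : ∀ x ∈ Icc a b, HasDerivAt f (f' x) x) (hf' : ∀ x ∈ Ioo a b, HasDerivAt f' (f'' x) x)
    (hf'' : ∀ x ∈ Ioo a b, 0 < f'' x) : StrictConvexOn ℝ (Icc a b) f := by
  have hcont : ContinuousOn f (Icc a b) := fun x hx => (hf x hx).continuousAt.continuousWithinAt
  refine StrictMonoOn.strictConvexOn_of_deriv (convex_Icc a b) hcont ?_
  rw [interior_Icc]
  have hmono : StrictMonoOn f' (Ioo a b) := by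
    refine strictMonoOn_of_hasDerivWithinAt_pos (f' := f'') (convex_Ioo a b)
      (fun x hx => (hf' x hx).continuousAt.continuousWithinAt) (fun x hx => ?_) (fun x hx => ?_)
    all_goals rw [interior_Ioo] at hx
    exacts [(hf' x hx).hasDerivWithinAt, hf'' x hx]
  exact hmono.congr fun x hx => ((hf x (Ioo_subset_Icc_self hx)).deriv).symm

theorem exp_le_sum_range_eight {y : ℝ} (h0 : 0 ≤ y) (h1 : y ≤ 1) :
    exp y ≤ ∑ i ∈ Finset.range 8, y ^ i / i.factorial + y ^ 8 / 35840 := by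
  have := exp_bound' h0 h1 (n := 8) (by norm_num)
  norm_num [Nat.factorial] at this
  linarith

theorem div_pow_le_div_pow {c a b : ℝ} (n : ℕ) (hc : 0 ≤ c) (ha : 0 < a) (hab : a ≤ b) :
    c / b ^ n ≤ c / a ^ n := by
  gcongr

namespace TangencyValue

noncomputable def corner : ℝ := 1 / √2

noncomputable def barrier (x : ℝ) : ℝ := 0.02 / (x + corner) ^ 2 + 0.02 / (corner - x) ^ 2

noncomputable def barrierDeriv (x : ℝ) : ℝ := -0.04 / (x + corner) ^ 3 + 0.04 / (corner - x) ^ 3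

noncomputable def barrierDeriv2 (x : ℝ) : ℝ := 0.12 / (x + corner) ^ 4 + 0.12 / (corner - x) ^ 4

noncomputable def gap (x : ℝ) : ℝ := 2 * (√(1 - x ^ 2) - x)

noncomputable def gapDeriv (x : ℝ) : ℝ := -2 * (x / √(1 - x ^ 2) + 1)

noncomputable def gapDeriv2 (x : ℝ) : ℝ := -2 / √(1 - x ^ 2) ^ 3

noncomputable def level (x : ℝ) : ℝ := gap x * exp (barrier x)

noncomputable def levelDeriv (x : ℝ) : ℝ := (gapDeriv x + gap x * barrierDeriv x) * exp (barrier x)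

noncomputable def levelDeriv2 (x : ℝ) : ℝ :=
  (gapDeriv2 x + 2 * gapDeriv x * barrierDeriv x + gap x * (barrierDeriv x ^ 2 + barrierDeriv2 x)) *
    exp (barrier x)

theorem corner_sq : corner ^ 2 = 1 / 2 := by
  rw [corner, div_pow, one_pow, sq_sqrt (by norm_num)]

theorem corner_pos : 0 < corner := by
  rw [corner]
  positivity

theorem corner_gt : (0.70710678 : ℝ) < corner := by nlinarith [corner_sq, corner_pos]

theorem corner_lt : corner < 0.70710679 := by nlinarith [corner_sq, corner_pos]

section Derivatives

variable {x : ℝ}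

theorem hasDerivAt_barrier (hx : x ∈ Ioo (-corner) corner) :
    HasDerivAt barrier (barrierDeriv x) x := by
  have hplus := ((hasDerivAt_id' x).add_const corner).const_div_pow 0.02 2 (by linarith [hx.1])
  have hminus := ((hasDerivAt_id' x).const_sub corner).const_div_pow 0.02 2 (by linarith [hx.2])
  refine (hplus.add hminus).congr_deriv ?_
  rw [barrierDeriv]
  norm_num

theorem hasDerivAt_barrierDeriv (hx : x ∈ Ioo (-corner) corner) :
    HasDerivAt barrierDeriv (barrierDeriv2 x) x := by
  have hplus := ((hasDerivAt_id' x).add_const corner).const_div_pow (-0.04) 3 (by linarith [hx.1])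
  have hminus := ((hasDerivAt_id' x).const_sub corner).const_div_pow 0.04 3 (by linarith [hx.2])
  refine (hplus.add hminus).congr_deriv ?_
  rw [barrierDeriv2]
  norm_num

theorem hasDerivAt_gap (hx : x ^ 2 < 1) : HasDerivAt gap (gapDeriv x) x := by
  have hsq : HasDerivAt (fun y => 1 - y ^ 2) (-(2 * x)) x := by
    simpa using (hasDerivAt_pow 2 x).const_sub 1
  have hs : 0 < √(1 - x ^ 2) := sqrt_pos.2 (by linarith)
  refine (((hsq.sqrt (by linarith)).sub (hasDerivAt_id' x)).const_mul 2).congr_deriv ?_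
  rw [gapDeriv]
  field_simp
  ring

theorem hasDerivAt_gapDeriv (hx : x ^ 2 < 1) : HasDerivAt gapDeriv (gapDeriv2 x) x := by
  have hsq : HasDerivAt (fun y => 1 - y ^ 2) (-(2 * x)) x := by
    simpa using (hasDerivAt_pow 2 x).const_sub 1
  have hs : 0 < √(1 - x ^ 2) := sqrt_pos.2 (by linarith)
  have hs2 : √(1 - x ^ 2) ^ 2 = 1 - x ^ 2 := sq_sqrt (by linarith)
  refine ((((hasDerivAt_id' x).div (hsq.sqrt (by linarith)) hs.ne').add_const 1).const_mul
    (-2)).congr_deriv ?_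
  rw [gapDeriv2]
  field_simp
  rw [hs2]
  ring

theorem sq_lt_one_of_mem_Ioo_corner (hx : x ∈ Ioo (-corner) corner) : x ^ 2 < 1 := by
  nlinarith [corner_sq, hx.1, hx.2]

theorem hasDerivAt_level (hx : x ∈ Ioo (-corner) corner) : HasDerivAt level (levelDeriv x) x :=
  (hasDerivAt_gap (sq_lt_one_of_mem_Ioo_corner hx)).mul_exp (hasDerivAt_barrier hx)

theorem hasDerivAt_levelDeriv (hx : x ∈ Ioo (-corner) corner) :
    HasDerivAt levelDeriv (levelDeriv2 x) x := by
  have hx1 := sq_lt_one_of_mem_Ioo_corner hx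
  refine (((hasDerivAt_gapDeriv hx1).add ((hasDerivAt_gap hx1).mul
    (hasDerivAt_barrierDeriv hx))).mul_exp (hasDerivAt_barrier hx)).congr_deriv ?_
  simp only [levelDeriv2, Pi.add_apply, Pi.mul_apply]
  ring

end Derivatives

/- The numerical witnesses passed to the `…_of_bounds` lemmas below are decimal roundings in the
safe direction; every hypothesis they produce is a rational inequality closed by `norm_num`. -/

theorem le_level_of_bounds {p q s e L x : ℝ} (hx : x ∈ Icc p q) (hp : 0 ≤ p) (hq : q ≤ 0.707)
    (hs : s ^ 2 ≤ 1 - q ^ 2) (hqs : q ≤ s) (he0 : 0 ≤ e)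
    (he : e ≤ 0.02 / (q + 0.70710679) ^ 2 + 0.02 / (0.70710679 - p) ^ 2)
    (hL : L ≤ 2 * (s - q) * ∑ i ∈ Finset.range 8, e ^ i / i.factorial) : L ≤ level x := by
  obtain ⟨hpx, hxq⟩ := hx
  have := corner_gt
  have := corner_lt
  have hsx : s ≤ √(1 - x ^ 2) := le_sqrt_of_sq_le (by nlinarith)
  have hbarrier : e ≤ barrier x := by
    have hplus : 0.02 / (q + 0.70710679) ^ 2 ≤ 0.02 / (x + corner) ^ 2 :=
      div_pow_le_div_pow 2 (by norm_num) (by linarith) (by linarith)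
    have hminus : 0.02 / (0.70710679 - p) ^ 2 ≤ 0.02 / (corner - x) ^ 2 :=
      div_pow_le_div_pow 2 (by norm_num) (by linarith) (by linarith)
    rw [barrier]
    linarith
  calc L ≤ 2 * (s - q) * ∑ i ∈ Finset.range 8, e ^ i / i.factorial := hL
    _ ≤ gap x * exp (barrier x) := by
      apply mul_le_mul
      · rw [gap]; linarith
      · exact (sum_le_exp_of_nonneg he0 8).trans (exp_le_exp.2 hbarrier)
      · positivity
      · rw [gap]; linarith

theorem level_le_of_bounds {x s e U : ℝ} (hx0 : 0 ≤ x) (hx : x ≤ 0.62) (hs : 1 - x ^ 2 ≤ s ^ 2)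
    (hs0 : 0 ≤ s) (he1 : e ≤ 1)
    (he : 0.02 / (x + 0.70710678) ^ 2 + 0.02 / (0.70710678 - x) ^ 2 ≤ e)
    (hU : 2 * (s - x) * (∑ i ∈ Finset.range 8, e ^ i / i.factorial + e ^ 8 / 35840) ≤ U) :
    level x ≤ U := by
  have := corner_gt
  have := corner_lt
  have hsx : √(1 - x ^ 2) ≤ s := (sqrt_le_left hs0).2 hs
  have hbarrier : barrier x ≤ e := by
    have hplus : 0.02 / (x + corner) ^ 2 ≤ 0.02 / (x + 0.70710678) ^ 2 :=
      div_pow_le_div_pow 2 (by norm_num) (by linarith) (by linarith)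
    have hminus : 0.02 / (corner - x) ^ 2 ≤ 0.02 / (0.70710678 - x) ^ 2 :=
      div_pow_le_div_pow 2 (by norm_num) (by linarith) (by linarith)
    rw [barrier]
    linarith
  have hsqrt : 0.78 ≤ √(1 - x ^ 2) := le_sqrt_of_sq_le (by nlinarith)
  calc level x = gap x * exp (barrier x) := rfl
    _ ≤ 2 * (s - x) * (∑ i ∈ Finset.range 8, e ^ i / i.factorial + e ^ 8 / 35840) := by
      apply mul_le_mul
      · rw [gap]; linarith
      · exact (exp_le_exp.2 hbarrier).trans (exp_le_sum_range_eight (he.trans' (by positivity)) he1)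
      · positivity
      · linarith
    _ ≤ U := hU

theorem lt_level_of_ge {x : ℝ} (hx : 0.62 ≤ x) (hxc : x < corner) : 1.19 < level x := by
  have := corner_gt
  have := corner_lt
  -- The gap vanishes only linearly in `T = corner - x`, the barrier blows up like `0.02 / T²`.
  set T := corner - x
  have hT0 : 0 < T := by linarith
  have hT1 : T ≤ 0.0872 := by linarith
  have hs2 : √(1 - x ^ 2) ^ 2 = 1 - x ^ 2 := sq_sqrt (by nlinarith)
  have hs1 : √(1 - x ^ 2) ≤ 0.79 := (sqrt_le_left (by norm_num)).2 (by nlinarith)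
  have hfactor : (√(1 - x ^ 2) - x) * (√(1 - x ^ 2) + x) = 2 * T * (corner + x) := by
    linear_combination hs2 - 2 * corner_sq
  have hgap : 3.1 * T ≤ gap x := by
    rw [gap]
    nlinarith [sqrt_nonneg (1 - x ^ 2)]
  have hbarrier : 0.02 / T ^ 2 ≤ barrier x := by
    have : 0 ≤ 0.02 / (x + corner) ^ 2 := by positivity
    rw [barrier]
    linarith
  have hexp : 1 + 0.02 / T ^ 2 + (0.02 / T ^ 2) ^ 2 / 2 ≤ exp (barrier x) :=
    (quadratic_le_exp_of_nonneg (by positivity)).trans (exp_le_exp.2 hbarrier)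
  have hpoly : 1.19 < 3.1 * T * (1 + 0.02 / T ^ 2 + (0.02 / T ^ 2) ^ 2 / 2) := by
    have h1 : 0.22 ≤ 0.02 / T := by rw [le_div_iff₀ hT0]; linarith
    have h3 : 0.25 ≤ 0.0002 / T ^ 3 := by
      rw [le_div_iff₀ (by positivity)]
      nlinarith [pow_le_pow_left₀ hT0.le hT1 3]
    have : 3.1 * T * (1 + 0.02 / T ^ 2 + (0.02 / T ^ 2) ^ 2 / 2)
        = 3.1 * (T + 0.02 / T + 0.0002 / T ^ 3) := by
      field_simp
      ring
    rw [this]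
    linarith
  calc (1.19 : ℝ) < 3.1 * T * (1 + 0.02 / T ^ 2 + (0.02 / T ^ 2) ^ 2 / 2) := hpoly
    _ ≤ gap x * exp (barrier x) := mul_le_mul hgap hexp (by positivity) (by linarith)

theorem levelDeriv2_pos_of_bounds {p q s d₁ D₁ d₂ x : ℝ} (hx : x ∈ Icc p q) (hp : 0.44 ≤ p)
    (hq : q ≤ 0.62) (hs : s ^ 2 ≤ 1 - q ^ 2) (hqs : q < s) (hd₁0 : 0 ≤ d₁)
    (hd₁ : d₁ ≤ 0.04 / (0.70710679 - p) ^ 3 - 0.04 / (p + 0.70710678) ^ 3)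
    (hD₁ : 0.04 / (0.70710678 - q) ^ 3 - 0.04 / (q + 0.70710679) ^ 3 ≤ D₁)
    (hd₂ : d₂ ≤ 0.12 / (q + 0.70710679) ^ 4 + 0.12 / (0.70710679 - p) ^ 4)
    (hfin : 0 < -1 / s ^ 3 - 2 * (q / s + 1) * D₁ + (s - q) * (d₁ ^ 2 + d₂)) :
    0 < levelDeriv2 x := by
  obtain ⟨hpx, hxq⟩ := hx
  have := corner_gt
  have := corner_lt
  have hsr : s ≤ √(1 - x ^ 2) := le_sqrt_of_sq_le (by nlinarith)
  have hs0 : 0 < s := by linarith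
  set r := √(1 - x ^ 2)
  have hplus : p + 0.70710678 ≤ x + corner ∧ x + corner ≤ q + 0.70710679 :=
    ⟨by linarith, by linarith⟩
  have hminus : 0.70710678 - q ≤ corner - x ∧ corner - x ≤ 0.70710679 - p :=
    ⟨by linarith, by linarith⟩
  have hE' : d₁ ≤ barrierDeriv x ∧ barrierDeriv x ≤ D₁ := by
    have := div_pow_le_div_pow 3 (c := 0.04) (by norm_num) (by linarith) hplus.1
    have := div_pow_le_div_pow 3 (c := 0.04) (by norm_num) (by linarith) hplus.2
    have := div_pow_le_div_pow 3 (c := 0.04) (by norm_num) (by linarith) hminus.1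
    have := div_pow_le_div_pow 3 (c := 0.04) (by norm_num) (by linarith) hminus.2
    rw [barrierDeriv, neg_div]
    constructor <;> linarith
  have hE'' : d₂ ≤ barrierDeriv2 x := by
    have := div_pow_le_div_pow 4 (c := 0.12) (by norm_num) (by linarith) hplus.2
    have := div_pow_le_div_pow 4 (c := 0.12) (by norm_num) (by linarith) hminus.2
    rw [barrierDeriv2]
    linarith
  have hcube : -1 / s ^ 3 ≤ -1 / r ^ 3 := by
    rw [neg_div, neg_div, neg_le_neg_iff]
    exact div_pow_le_div_pow 3 zero_le_one hs0 hsr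
  have hslope : (x / r + 1) * barrierDeriv x ≤ (q / s + 1) * D₁ :=
    mul_le_mul (by gcongr; linarith) hE'.2 (hd₁0.trans hE'.1)
      (by linarith [div_nonneg (by linarith : (0 : ℝ) ≤ q) hs0.le])
  have hsecond : (s - q) * (d₁ ^ 2 + d₂) ≤ (r - x) * (barrierDeriv x ^ 2 + barrierDeriv2 x) := by
    refine mul_le_mul_of_nonneg (by linarith) ?_ (by linarith) ?_
    · nlinarith [hE'.1]
    · have : 0 < barrierDeriv2 x := by
        rw [barrierDeriv2]
        have : 0 < corner - x := by linarith
        positivity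
      positivity
  refine mul_pos ?_ (exp_pos _)
  calc 0 < 2 * (-1 / s ^ 3 - 2 * (q / s + 1) * D₁ + (s - q) * (d₁ ^ 2 + d₂)) := by linarith
    _ ≤ 2 * (-1 / r ^ 3 - 2 * ((x / r + 1) * barrierDeriv x) +
        (r - x) * (barrierDeriv x ^ 2 + barrierDeriv2 x)) := by linarith
    _ = _ := by rw [gapDeriv2, gapDeriv, gap]; ring

theorem lt_level_of_le {x : ℝ} (hx0 : 0 ≤ x) (hx : x ≤ 0.44) : 1.19 < level x := by
  suffices 1.195 ≤ level x by linarith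
  rcases le_total x 0.352 with h352 | h352
  · apply le_level_of_bounds (p := 0) (q := 0.352) (s := 0.936) (e := 0.057829) ⟨hx0, h352⟩
      <;> norm_num
  rcases le_total x 0.41 with h41 | h41
  · apply le_level_of_bounds (p := 0.352) (q := 0.41) (s := 0.9120855) (e := 0.174629)
      ⟨h352, h41⟩ <;> norm_num
  rcases le_total x 0.43 with h43 | h43
  · apply le_level_of_bounds (p := 0.41) (q := 0.43) (s := 0.9028288) (e := 0.242039)
      ⟨h41, h43⟩ <;> norm_num
  · apply le_level_of_bounds (p := 0.43) (q := 0.44) (s := 0.8979977) (e := 0.275656)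
      ⟨h43, hx⟩ <;> norm_num

theorem mem_window_of_level_le {x : ℝ} (hx0 : 0 ≤ x) (hxc : x < corner) (hx : level x ≤ 1.19) :
    x ∈ Icc (0.44 : ℝ) 0.62 := by
  by_contra hout
  rcases not_and_or.1 hout with h | h
  · linarith [lt_level_of_le hx0 (not_le.1 h).le]
  · linarith [lt_level_of_ge (not_le.1 h).le hxc]

theorem level_samples :
    1.182744 ≤ level 0.4935 ∧ level 0.4945 ≤ 1.182667 ∧
      1.182743 ≤ level 0.498 ∧ level 0.5 ≤ 1.183049 := by
  refine ⟨?_, ?_, ?_, ?_⟩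
  · apply le_level_of_bounds (p := 0.4935) (q := 0.4935) (s := 0.86974579) (e := 0.4522035)
      ⟨le_rfl, le_rfl⟩ <;> norm_num
  · apply level_le_of_bounds (s := 0.86917763) (e := 0.4563139) <;> norm_num
  · apply le_level_of_bounds (p := 0.498) (q := 0.498) (s := 0.86717702) (e := 0.4711688)
      ⟨le_rfl, le_rfl⟩ <;> norm_num
  · apply level_le_of_bounds (s := 0.86602541) (e := 0.4800001) <;> norm_num

theorem levelDeriv2_pos_of_mem_window {x : ℝ} (hx : x ∈ Icc (0.44 : ℝ) 0.62) :
    0 < levelDeriv2 x := by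
  obtain ⟨h44, h62⟩ := hx
  rcases le_total x 0.47 with h47 | h47
  · apply levelDeriv2_pos_of_bounds (p := 0.44) (q := 0.47) (s := 0.8826664)
      (d₁ := 2.0724648) (D₁ := 2.9762128) (d₂ := 23.6369534) ⟨h44, h47⟩ <;> norm_num
  rcases le_total x 0.5016 with h5016 | h5016
  · apply levelDeriv2_pos_of_bounds (p := 0.47) (q := 0.5016) (s := 0.8650996)
      (d₁ := 2.9762123) (D₁ := 4.5860813) (d₂ := 38.0231334) ⟨h47, h5016⟩ <;> norm_num
  rcases le_total x 0.533 with h533 | h533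
  · apply levelDeriv2_pos_of_bounds (p := 0.5016) (q := 0.533) (s := 0.8461152)
      (d₁ := 4.5860805) (D₁ := 7.558044) (d₂ := 67.329277) ⟨h5016, h533⟩ <;> norm_num
  rcases le_total x 0.5612 with h5612 | h5612
  · apply levelDeriv2_pos_of_bounds (p := 0.533) (q := 0.5612) (s := 0.8276802)
      (d₁ := 7.5580426) (D₁ := 12.8579538) (d₂ := 130.6389279) ⟨h533, h5612⟩ <;> norm_num
  rcases le_total x 0.5913 with h5913 | h5913
  · apply levelDeriv2_pos_of_bounds (p := 0.5612) (q := 0.5913) (s := 0.8064516)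
      (d₁ := 12.8579511) (D₁ := 25.7365175) (d₂ := 264.8185983) ⟨h5612, h5913⟩ <;> norm_num
  · apply levelDeriv2_pos_of_bounds (p := 0.5913) (q := 0.62) (s := 0.7846018)
      (d₁ := 25.7365107) (D₁ := 60.50361) (d₂ := 667.2219616) ⟨h5913, h62⟩ <;> norm_num

theorem mem_Ioo_corner_of_mem_window {x : ℝ} (hx : x ∈ Icc (0.44 : ℝ) 0.62) :
    x ∈ Ioo (-corner) corner :=
  ⟨by linarith [hx.1, corner_pos], by linarith [hx.2, corner_gt]⟩

theorem strictConvexOn_level : StrictConvexOn ℝ (Icc (0.44 : ℝ) 0.62) level :=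
  strictConvexOn_Icc_of_hasDerivAt_two_pos
    (fun _ hx => hasDerivAt_level (mem_Ioo_corner_of_mem_window hx))
    (fun _ hx => hasDerivAt_levelDeriv (mem_Ioo_corner_of_mem_window (Ioo_subset_Icc_self hx)))
    (fun _ hx => levelDeriv2_pos_of_mem_window (Ioo_subset_Icc_self hx))

theorem le_level_of_mem_window {y : ℝ} (hy : y ∈ Icc (0.44 : ℝ) 0.62) : 1.182 ≤ level y := by
  -- Since `level 0.4945` lies below `level 0.4935` and `level 0.498`, convexity bounds `level`
  -- by these values outside `[0.4935, 0.498]`; inside, the chord over `[0.498, 0.5]` bounds it.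
  have hconv := strictConvexOn_level.convexOn
  obtain ⟨h4935, h4945, h498, h5⟩ := level_samples
  rcases lt_or_ge y 0.4935 with hy4935 | hy4935
  · have := hconv.slope_mono_adjacent hy (show (0.4945 : ℝ) ∈ Icc 0.44 0.62 by norm_num)
      hy4935 (by norm_num)
    rw [div_le_div_iff₀ (by linarith) (by norm_num)] at this
    nlinarith
  rcases lt_or_ge y 0.498 with hy498 | hy498
  · have := hconv.slope_mono_adjacent hy (show (0.5 : ℝ) ∈ Icc 0.44 0.62 by norm_num)
      hy498 (by norm_num)
    rw [div_le_div_iff₀ (by linarith) (by norm_num)] at this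
    nlinarith
  rcases hy498.eq_or_lt with rfl | hy498
  · linarith
  · have := hconv.slope_mono_adjacent (show (0.4945 : ℝ) ∈ Icc 0.44 0.62 by norm_num) hy
      (by norm_num) hy498
    rw [div_le_div_iff₀ (by norm_num) (by linarith)] at this
    nlinarith

theorem eq_side_iff {c x : ℝ} :
    -√(1 - x ^ 2) + c * exp (-(0.02 / (x + 1 / √2) ^ 2 + 0.02 / (x - 1 / √2) ^ 2)) =
      √(1 - x ^ 2) - 2 * x ↔ level x = c := by
  have hbarrier : 0.02 / (x + 1 / √2) ^ 2 + 0.02 / (x - 1 / √2) ^ 2 = barrier x := by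
    rw [barrier, corner]
    ring
  rw [hbarrier, exp_neg, level, gap]
  have := exp_pos (barrier x)
  constructor <;> intro h
  · field_simp at h
    linarith
  · rw [← h]
    field_simp
    ring

end TangencyValue

open TangencyValue

/-- With `f_c(x) = −√(1−x²) + c·exp(−(0.02/(x+1/√2)² + 0.02/(x−1/√2)²))`, there
is a value `c > 0` (approximately `1.18264`) for which the graph of `f_c` meets
the curve `y = √(1−x²) − 2x` in exactly one point with `0 < x < 1/√2`. -/
theorem unique_tangency_value (f : ℝ → ℝ → ℝ)
    (hf : ∀ c x : ℝ, f c x =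
      -Real.sqrt (1 - x ^ 2) +
        c * Real.exp (-(0.02 / (x + 1 / Real.sqrt 2) ^ 2 +
                        0.02 / (x - 1 / Real.sqrt 2) ^ 2))) :
    ∃ c : ℝ, 0 < c ∧ |c - 1.18264| < 0.001 ∧
      ∃! x : ℝ, 0 < x ∧ x < 1 / Real.sqrt 2 ∧
        f c x = Real.sqrt (1 - x ^ 2) - 2 * x := by
  simp_rw [hf, eq_side_iff]
  have hcont : ContinuousOn level (Icc (0.44 : ℝ) 0.62) := fun x hx =>
    (hasDerivAt_level (mem_Ioo_corner_of_mem_window hx)).continuousAt.continuousWithinAt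
  obtain ⟨z, hz, hmin⟩ := isCompact_Icc.exists_isMinOn (nonempty_Icc.2 (by norm_num)) hcont
  have hlow : 1.182 ≤ level z := le_level_of_mem_window hz
  have hup : level z ≤ 1.182667 := (hmin (by norm_num : (0.4945 : ℝ) ∈ Icc 0.44 0.62)).trans
    level_samples.2.1
  refine ⟨level z, by linarith, abs_lt.2 ⟨by linarith, by linarith⟩, z,
    ⟨by linarith [hz.1], by linarith [hz.2, corner_gt, show corner = 1 / √2 from rfl], rfl⟩, ?_⟩
  rintro y ⟨hy0, hyc, hyz⟩
  exact strictConvexOn_level.eq_of_isMinOn (fun t ht => hyz.le.trans (hmin ht))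
    hmin (mem_window_of_level_le hy0.le hyc (by linarith)) hz
end

section
/- Let U < V be real numbers and let g : ℝ → ℝ be defined by g(θ) = exp(−(0.02/(θ − U)² + 0.02/(V − θ)²)) for U < θ < V and g(θ) = 0 otherwise. For c > 0 set r_c(θ) = 1 + c·g(θ). There exists c₀ > 0 such that for all c with 0 < c ≤ c₀ and all θ ∈ ℝ, the signed-curvature numerator of the polar curve θ ↦ (r_c(θ) cos θ, r_c(θ) sin θ) is positive: r_c(θ)² + 2·(r_c′(θ))² − r_c(θ)·r_c″(θ) > 0. (Hence the signed curvature of this curve is everywhere positive and the region it bounds, when such arcs replace arcs of the unit circle, is convex.) -/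
/-!
With `r = 1 + c g` and `g ≥ 0`, the numerator is at least `r (r - c g'') ≥ r (1 - c sup |g''|)`,
so it suffices that `g''` is bounded. On `(U, V)` the bump is `expNegInvGlue ∘ K` for a smooth `K`
vanishing at `U` and `V`; since `expNegInvGlue` is flat at `0`, this composite vanishes to second
order at the endpoints, so its extension by zero is twice differentiable and its second derivative
is the extension by zero of a continuous function, hence bounded by its maximum on `[U, V]`.
-/

open Real Set Filter Topology Asymptotics

section Indicator

variable {𝕜 E : Type*} [NontriviallyNormedField 𝕜] [NormedAddCommGroup E] [NormedSpace 𝕜 E]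

theorem HasDerivAt.zero_of_norm_le {f F : 𝕜 → E} {x : 𝕜} (hF : HasDerivAt F 0 x)
    (hFx : F x = 0) (hle : ∀ᶠ y in 𝓝 x, ‖f y‖ ≤ ‖F y‖) : HasDerivAt f 0 x := by
  have hfx : f x = 0 := norm_le_zero_iff.1 (by simpa [hFx] using hle.self_of_nhds)
  rw [hasDerivAt_iff_isLittleO] at hF ⊢
  simp only [hfx, hFx, smul_zero, sub_zero] at hF ⊢
  exact (IsBigO.of_bound' hle).trans_isLittleO hF

theorem hasDerivAt_indicator_of_isOpen {s : Set 𝕜} (hs : IsOpen s) {F F' : 𝕜 → E}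
    (hF : ∀ x ∈ closure s, HasDerivAt F (F' x) x)
    (hfr : ∀ x ∈ frontier s, F x = 0 ∧ F' x = 0) (x : 𝕜) :
    HasDerivAt (s.indicator F) (s.indicator F' x) x := by
  by_cases hxs : x ∈ s
  · rw [indicator_of_mem hxs]
    refine (hF x (subset_closure hxs)).congr_of_eventuallyEq ?_
    filter_upwards [hs.mem_nhds hxs] with y hy using indicator_of_mem hy F
  rw [indicator_of_notMem hxs]
  by_cases hxc : x ∈ closure s
  · obtain ⟨hFx, hF'x⟩ := hfr x ⟨hxc, by rwa [hs.interior_eq]⟩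
    exact (hF'x ▸ hF x hxc).zero_of_norm_le hFx
      (Eventually.of_forall fun y => norm_indicator_le_norm_self F y)
  · refine (hasDerivAt_const x (0 : E)).congr_of_eventuallyEq ?_
    filter_upwards [isClosed_closure.isOpen_compl.mem_nhds hxc] with y hy
    exact indicator_of_notMem (fun h => hy (subset_closure h)) F

end Indicator

theorem exists_bound_deriv_deriv_indicator {s : Set ℝ} (hs : IsOpen s)
    (hs' : Bornology.IsBounded s) {F : ℝ → ℝ} (hF : ContDiff ℝ 2 F)
    (hfr : ∀ x ∈ frontier s, F x = 0 ∧ deriv F x = 0 ∧ deriv (deriv F) x = 0) :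
    ∃ M, ∀ x, |deriv (deriv (s.indicator F)) x| ≤ M := by
  have hF' : ContDiff ℝ 1 (deriv F) := hF.deriv' (n := 1)
  have h1 : deriv (s.indicator F) = s.indicator (deriv F) := funext fun x =>
    (hasDerivAt_indicator_of_isOpen hs (fun y _ => (hF.differentiable two_ne_zero y).hasDerivAt)
      (fun y hy => ⟨(hfr y hy).1, (hfr y hy).2.1⟩) x).deriv
  have h2 : deriv (s.indicator (deriv F)) = s.indicator (deriv (deriv F)) := funext fun x =>
    (hasDerivAt_indicator_of_isOpen hs (fun y _ => (hF'.differentiable one_ne_zero y).hasDerivAt)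
      (fun y hy => (hfr y hy).2) x).deriv
  obtain ⟨M, hM⟩ := hs'.isCompact_closure.exists_bound_of_continuousOn
    (hF'.continuous_deriv le_rfl).continuousOn
  refine ⟨max M 0, fun x => ?_⟩
  rw [h1, h2]
  by_cases hx : x ∈ s
  · rw [indicator_of_mem hx]
    exact (hM x (subset_closure hx)).trans (le_max_left M 0)
  · rw [indicator_of_notMem hx, abs_zero]
    exact le_max_right M 0

theorem iteratedDeriv_expNegInvGlue_of_nonpos (k : ℕ) {x : ℝ} (hx : x ≤ 0) :
    iteratedDeriv k expNegInvGlue x = 0 := by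
  have hclosed : IsClosed {y | iteratedDeriv k expNegInvGlue y = 0} :=
    isClosed_eq ((expNegInvGlue.contDiff (n := k)).continuous_iteratedDeriv' k) continuous_const
  have hneg : Iio 0 ⊆ {y | iteratedDeriv k expNegInvGlue y = 0} := fun y hy => by
    have hzero : expNegInvGlue =ᶠ[𝓝 y] 0 := by
      filter_upwards [Iio_mem_nhds hy] with z hz using expNegInvGlue.zero_of_nonpos hz.le
    simp [hzero.iteratedDeriv_eq k]
  exact hclosed.closure_subset_iff.2 hneg (by rwa [closure_Iio])

theorem deriv_deriv_comp_eq_zero {f K : ℝ → ℝ} {x : ℝ} (hf : ContDiff ℝ 2 f)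
    (hK : ContDiff ℝ 2 K) (h1 : deriv f (K x) = 0) (h2 : deriv (deriv f) (K x) = 0) :
    deriv (deriv (f ∘ K)) x = 0 := by
  have hf' : ContDiff ℝ 1 (deriv f) := hf.deriv' (n := 1)
  have hK' : ContDiff ℝ 1 (deriv K) := hK.deriv' (n := 1)
  have hchain : deriv (f ∘ K) = deriv f ∘ K * deriv K := funext fun y =>
    deriv_comp y (hf.differentiable two_ne_zero _) (hK.differentiable two_ne_zero _)
  have hprod := ((hf'.differentiable one_ne_zero (K x)).hasDerivAt.comp x
    (hK.differentiable two_ne_zero x).hasDerivAt).mul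
    (hK'.differentiable one_ne_zero x).hasDerivAt
  rw [hchain, hprod.deriv]
  simp [h1, h2]

theorem polar_curvature_numerator_pos {r r' r'' : ℝ} (hr : 0 < r) (hr'' : r'' < r) :
    0 < r ^ 2 + 2 * r' ^ 2 - r * r'' := by
  nlinarith [mul_pos hr (sub_pos.2 hr''), sq_nonneg r']

noncomputable def bump (a U V θ : ℝ) : ℝ :=
  if U < θ ∧ θ < V then exp (-(a / (θ - U) ^ 2 + a / (V - θ) ^ 2)) else 0

/-- On `(U, V)` the reciprocal of `a / (θ - U) ^ 2 + a / (V - θ) ^ 2`, written so as to be smooth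
on all of `ℝ`. -/
noncomputable def bumpExponentInv (a U V θ : ℝ) : ℝ :=
  (θ - U) ^ 2 * (V - θ) ^ 2 / (a * ((θ - U) ^ 2 + (V - θ) ^ 2))

section Bump

variable {a U V : ℝ}

theorem bump_nonneg (θ : ℝ) : 0 ≤ bump a U V θ := by
  unfold bump
  split_ifs
  exacts [(exp_pos _).le, le_rfl]

theorem contDiff_bumpExponentInv (ha : a ≠ 0) (hUV : U ≠ V) {n : WithTop ℕ∞} :
    ContDiff ℝ n (bumpExponentInv a U V) := by
  refine ContDiff.div (by fun_prop) (by fun_prop) fun θ => mul_ne_zero ha fun h => hUV ?_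
  obtain ⟨hU, hV⟩ := (add_eq_zero_iff_of_nonneg (sq_nonneg _) (sq_nonneg _)).1 h
  linarith [(pow_eq_zero_iff two_ne_zero).1 hU, (pow_eq_zero_iff two_ne_zero).1 hV]

theorem bump_eq_indicator (ha : 0 < a) :
    bump a U V = (Ioo U V).indicator (expNegInvGlue ∘ bumpExponentInv a U V) := by
  funext θ
  by_cases hθ : U < θ ∧ θ < V
  · have hU : 0 < θ - U := sub_pos.2 hθ.1
    have hV : 0 < V - θ := sub_pos.2 hθ.2
    have hK : 0 < bumpExponentInv a U V θ := by unfold bumpExponentInv; positivity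
    rw [bump, if_pos hθ, indicator_of_mem (show θ ∈ Ioo U V from hθ), Function.comp_apply,
      expNegInvGlue, if_neg hK.not_ge, bumpExponentInv]
    congr 2
    field_simp
    ring
  · rw [bump, if_neg hθ, indicator_of_notMem (show θ ∉ Ioo U V from hθ)]

theorem exists_bound_deriv_deriv_bump (ha : 0 < a) (hUV : U < V) :
    ∃ M, ∀ θ, |deriv (deriv (bump a U V)) θ| ≤ M := by
  have hK : ContDiff ℝ 2 (bumpExponentInv a U V) := contDiff_bumpExponentInv ha.ne' hUV.ne
  rw [bump_eq_indicator ha]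
  refine exists_bound_deriv_deriv_indicator isOpen_Ioo (Metric.isBounded_Ioo U V)
    (expNegInvGlue.contDiff.comp hK) fun θ hθ => ?_
  have hKθ : bumpExponentInv a U V θ = 0 := by
    rw [frontier_Ioo hUV] at hθ
    rcases hθ with rfl | rfl <;> simp [bumpExponentInv]
  have hE (k : ℕ) : iteratedDeriv k expNegInvGlue (bumpExponentInv a U V θ) = 0 :=
    iteratedDeriv_expNegInvGlue_of_nonpos k hKθ.le
  have hE1 : deriv expNegInvGlue (bumpExponentInv a U V θ) = 0 := by
    simpa using hE 1
  refine ⟨by simpa using hE 0, ?_, deriv_deriv_comp_eq_zero expNegInvGlue.contDiff hK hE1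
    (by simpa [iteratedDeriv_succ] using hE 2)⟩
  rw [deriv_comp θ (expNegInvGlue.contDiff.differentiable (n := 1) one_ne_zero _)
    (hK.differentiable two_ne_zero θ), hE1, zero_mul]

end Bump

/-- For the perturbed polar curve `r_c(θ) = 1 + c·g(θ)`, where `g` is the bump
function `exp(−(0.02/(θ−U)² + 0.02/(V−θ)²))` on `(U, V)` and `0` elsewhere,
there is `c₀ > 0` such that for every `0 < c ≤ c₀` the signed-curvature
numerator `r² + 2r′² − r·r″` is positive everywhere. -/
theorem polar_perturbation_convex (U V : ℝ) (hUV : U < V) (g : ℝ → ℝ)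
    (hg : ∀ θ : ℝ, g θ =
      if U < θ ∧ θ < V then
        Real.exp (-(0.02 / (θ - U) ^ 2 + 0.02 / (V - θ) ^ 2))
      else 0) :
    ∃ c₀ : ℝ, 0 < c₀ ∧ ∀ c : ℝ, 0 < c → c ≤ c₀ →
      ∀ θ : ℝ,
        0 < (fun t => 1 + c * g t) θ ^ 2 +
              2 * (deriv (fun t => 1 + c * g t) θ) ^ 2 -
              (fun t => 1 + c * g t) θ *
                deriv (deriv (fun t => 1 + c * g t)) θ := by
  obtain rfl : g = bump 0.02 U V := funext hg
  obtain ⟨M, hM⟩ := exists_bound_deriv_deriv_bump (by norm_num : (0 : ℝ) < 0.02) hUV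
  refine ⟨1 / (|M| + 1), by positivity, fun c hc hc₀ θ => ?_⟩
  simp only [deriv_const_add', deriv_const_mul_field']
  have hr : 1 ≤ 1 + c * bump 0.02 U V θ :=
    le_add_of_nonneg_right (mul_nonneg hc.le (bump_nonneg θ))
  refine polar_curvature_numerator_pos (by linarith) ?_
  calc c * deriv (deriv (bump 0.02 U V)) θ ≤ c * |M| :=
        mul_le_mul_of_nonneg_left ((le_abs_self _).trans ((hM θ).trans (le_abs_self M))) hc.le
    _ ≤ 1 / (|M| + 1) * |M| := mul_le_mul_of_nonneg_right hc₀ (abs_nonneg M)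
    _ < 1 := by rw [div_mul_eq_mul_div, one_mul, div_lt_one (by positivity)]; linarith
    _ ≤ 1 + c * bump 0.02 U V θ := hr
end

section
/- Let A₃ = {exp(iθ) : π/4 ≤ θ ≤ 7π/4} be the three-quarter arc of the unit circle, and let F be a finite subset of the open quarter arc {exp(iθ) : −π/4 < θ < π/4}. Then the collection of squares inscribed in A₃ ∪ F has cardinality exactly |F| + 1: each point v ∈ F ∪ {exp(iπ/4)} gives the inscribed square {v, i·v, −v, −i·v}, and these are all of them. -/
open Complex Real Set

/-!
A square `p, p + w, p + w + I w, p + I w` with all vertices on a circle about `0` has its centre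
at `0`, i.e. `w = I p - p`; so the squares inscribed in a subset of the unit circle are the sets
`{v, I v, -v, -I v}`. Each of them has exactly one vertex `v` in the half-open quarter arc
`{exp (ψ I) : -π/4 < ψ ≤ π/4}`, and its other three vertices lie in `A₃`. Hence the square lies in
`A₃ ∪ F` iff `v ∈ A₃ ∪ F`, i.e. iff `v = exp (π/4 I)` or `v ∈ F`.
-/

open ComplexConjugate

def rotSquare (v : ℂ) : Set ℂ :=
  {v, I * v, -v, -(I * v)}

lemma rotSquare_eq_square (p : ℂ) :
    rotSquare p = {p, p + (I * p - p), p + (I * p - p) + I * (I * p - p), p + I * (I * p - p)} := by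
  have h₂ : p + (I * p - p) = I * p := by ring
  have h₃ : p + (I * p - p) + I * (I * p - p) = -p := by linear_combination p * I_sq
  have h₄ : p + I * (I * p - p) = -(I * p) := by linear_combination p * I_sq
  rw [h₃, h₂, h₄, rotSquare]

lemma isSquarePts_rotSquare {v : ℂ} (hv : v ≠ 0) : IsSquarePts (rotSquare v) := by
  refine ⟨v, I * v - v, ?_, rotSquare_eq_square v⟩
  have hI : I - 1 ≠ 0 := fun h => by simpa using congrArg im h
  rw [← sub_one_mul]
  exact mul_ne_zero hI hv

lemma rotSquare_I_mul (v : ℂ) : rotSquare (I * v) = rotSquare v := by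
  have h : I * (I * v) = -v := by linear_combination v * I_sq
  ext z
  simp only [rotSquare, h, neg_neg, mem_insert_iff, mem_singleton_iff]
  tauto

lemma rotSquare_I_zpow_mul (k : ℤ) (v : ℂ) : rotSquare (I ^ k * v) = rotSquare v := by
  induction k using Int.induction_on with
  | zero => simp
  | succ k ih => rw [zpow_add_one₀ I_ne_zero, mul_comm _ I, mul_assoc, rotSquare_I_mul, ih]
  | pred k ih =>
    rw [← ih, ← rotSquare_I_mul, ← mul_assoc, ← zpow_one_add₀ I_ne_zero, add_sub_cancel]

lemma mem_rotSquare_iff {v z : ℂ} :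
    z ∈ rotSquare v ↔ z = v ∨ ∃ k : ℤ, k ∈ Icc 1 3 ∧ z = I ^ k * v := by
  constructor
  · rintro (rfl | rfl | rfl | rfl)
    · exact Or.inl rfl
    · exact Or.inr ⟨1, by simp, by simp⟩
    · exact Or.inr ⟨2, by simp, by simp⟩
    · exact Or.inr ⟨3, by simp, by simp [zpow_ofNat, pow_succ]⟩
  · rintro (rfl | ⟨k, ⟨hk₁, hk₃⟩, rfl⟩)
    · exact mem_insert _ _
    · interval_cases k <;> simp [rotSquare, zpow_ofNat, pow_succ]

lemma eq_I_mul_sub_of_norm_add_eq {p w : ℂ} (hw : w ≠ 0) (h₁ : ‖p + w‖ = ‖p‖)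
    (h₂ : ‖p + I * w‖ = ‖p‖) : w = I * p - p := by
  have e₁ : normSq (p + w) = normSq p := by simp only [normSq_eq_norm_sq, h₁]
  have e₂ : normSq (p + I * w) = normSq p := by simp only [normSq_eq_norm_sq, h₂]
  simp only [normSq_apply, add_re, add_im, mul_re, mul_im, I_re, I_im] at e₁ e₂
  -- `c / 2` is the centre of the square; `e₁` and `e₂` say that `conj c * w = 0`.
  set c := 2 * p + (1 + I) * w with hc_def
  have hc : conj c * w = 0 := by
    apply Complex.ext <;>
      simp only [hc_def, map_add, map_mul, map_one, map_ofNat, conj_I, mul_re, mul_im, add_re,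
        add_im, neg_re, neg_im, conj_re, conj_im, I_re, I_im, one_re, one_im, re_ofNat, im_ofNat,
        zero_re, zero_im]
    · linear_combination e₁
    · linear_combination -e₂
  have hc0 : c = 0 := by simpa [hw] using hc
  linear_combination (1 - I) / 2 * hc0 + w / 2 * I_sq

lemma IsSquarePts.exists_eq_rotSquare {S : Set ℂ} {r : ℝ} (hS : IsSquarePts S)
    (hSr : S ⊆ Metric.sphere 0 r) : ∃ p ∈ S, S = rotSquare p := by
  obtain ⟨p, w, hw, rfl⟩ := hS
  have hnorm : ∀ z ∈ ({p, p + w, p + w + I * w, p + I * w} : Set ℂ), ‖z‖ = r := fun z hz => by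
    simpa using hSr hz
  have hwp : w = I * p - p := eq_I_mul_sub_of_norm_add_eq hw
    ((hnorm _ (by simp)).trans (hnorm _ (by simp)).symm)
    ((hnorm _ (by simp)).trans (hnorm _ (by simp)).symm)
  subst hwp
  exact ⟨p, mem_insert _ _, (rotSquare_eq_square p).symm⟩

lemma exp_add_int_mul_pi_div_two_mul_I (ψ : ℝ) (k : ℤ) :
    cexp ((ψ + k * (π / 2) : ℝ) * I) = I ^ k * cexp (ψ * I) := by
  have h : ((ψ + k * (π / 2) : ℝ) : ℂ) * I = ψ * I + k * (π / 2 * I) := by push_cast; ring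
  rw [h, Complex.exp_add, exp_int_mul, exp_pi_div_two_mul_I, mul_comm]

lemma exp_mul_I_injOn_Ioc {a b : ℝ} (h : b - a ≤ 2 * π) :
    InjOn (fun θ : ℝ => cexp (θ * I)) (Ioc a b) :=
  fun _ hx _ hy hxy => Circle.exp_injOn_Ioc h hx hy (Circle.ext hxy)

/-- Half-open, so that it is a fundamental domain for multiplication by `I` on the circle. -/
def quarterArc : Set ℂ :=
  {z | ∃ ψ : ℝ, -(π / 4) < ψ ∧ ψ ≤ π / 4 ∧ z = cexp (ψ * I)}

def threeQuarterArc : Set ℂ :=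
  {z | ∃ θ : ℝ, π / 4 ≤ θ ∧ θ ≤ 7 * π / 4 ∧ z = cexp (θ * I)}

lemma quarterArc_subset_sphere : quarterArc ⊆ Metric.sphere 0 1 := by
  rintro _ ⟨ψ, -, -, rfl⟩
  simp [norm_exp_ofReal_mul_I]

lemma threeQuarterArc_subset_sphere : threeQuarterArc ⊆ Metric.sphere 0 1 := by
  rintro _ ⟨θ, -, -, rfl⟩
  simp [norm_exp_ofReal_mul_I]

lemma exists_mem_quarterArc_rotSquare_eq {p : ℂ} (hp : ‖p‖ = 1) :
    ∃ v ∈ quarterArc, rotSquare p = rotSquare v := by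
  have hπ : 0 < π / 2 := by positivity
  set ψ := toIocMod hπ (-(π / 4)) (arg p)
  have hψ : ψ ∈ Ioc (-(π / 4)) (-(π / 4) + π / 2) := toIocMod_mem_Ioc hπ _ _
  have harg : ψ + toIocDiv hπ (-(π / 4)) (arg p) * (π / 2) = arg p := by
    rw [← zsmul_eq_mul]
    exact toIocMod_add_toIocDiv_zsmul hπ (-(π / 4)) (arg p)
  have hp' : p = I ^ toIocDiv hπ (-(π / 4)) (arg p) * cexp (ψ * I) := by
    rw [← exp_add_int_mul_pi_div_two_mul_I, harg]
    simpa [hp] using (norm_mul_exp_arg_mul_I p).symm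
  refine ⟨cexp (ψ * I), ⟨ψ, hψ.1, by linarith [hψ.2], rfl⟩, ?_⟩
  rw [hp', rotSquare_I_zpow_mul]

lemma I_zpow_mul_mem_threeQuarterArc_diff_quarterArc {v : ℂ} (hv : v ∈ quarterArc) {k : ℤ}
    (hk : k ∈ Icc 1 3) : I ^ k * v ∈ threeQuarterArc \ quarterArc := by
  obtain ⟨ψ, hψ₁, hψ₂, rfl⟩ := hv
  have hk₁ : (1 : ℝ) ≤ k := by exact_mod_cast hk.1
  have hk₃ : (k : ℝ) ≤ 3 := by exact_mod_cast hk.2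
  have hθ₁ : π / 4 < ψ + k * (π / 2) := by nlinarith [pi_pos]
  have hθ₂ : ψ + k * (π / 2) ≤ 7 * π / 4 := by nlinarith [pi_pos]
  rw [← exp_add_int_mul_pi_div_two_mul_I]
  refine ⟨⟨_, hθ₁.le, hθ₂, rfl⟩, ?_⟩
  rintro ⟨φ, hφ₁, hφ₂, h⟩
  have := exp_mul_I_injOn_Ioc (a := -(π / 4)) (b := 7 * π / 4) (by linarith)
    ⟨by linarith, hθ₂⟩ ⟨hφ₁, by linarith⟩ h
  linarith

lemma exp_pi_div_four_mul_I_mem_quarterArc : cexp ((π / 4 : ℝ) * I) ∈ quarterArc :=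
  ⟨π / 4, by linarith [pi_pos], le_rfl, rfl⟩

lemma quarterArc_inter_threeQuarterArc :
    quarterArc ∩ threeQuarterArc = {cexp ((π / 4 : ℝ) * I)} := by
  have hπ := pi_pos
  ext z
  constructor
  · rintro ⟨⟨ψ, hψ₁, hψ₂, rfl⟩, θ, hθ₁, hθ₂, h⟩
    have := exp_mul_I_injOn_Ioc (a := -(π / 4)) (b := 7 * π / 4) (by linarith)
      ⟨hψ₁, by linarith⟩ ⟨by linarith, hθ₂⟩ h
    rw [mem_singleton_iff, show ψ = π / 4 by linarith]
  · rintro rfl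
    exact ⟨exp_pi_div_four_mul_I_mem_quarterArc, π / 4, le_rfl, by linarith, rfl⟩

lemma rotSquare_subset_threeQuarterArc_union_iff {F : Set ℂ} {v : ℂ} (hv : v ∈ quarterArc) :
    rotSquare v ⊆ threeQuarterArc ∪ F ↔ v ∈ insert (cexp ((π / 4 : ℝ) * I)) F := by
  have hvA : v ∈ threeQuarterArc ↔ v = cexp ((π / 4 : ℝ) * I) := by
    rw [← mem_singleton_iff, ← quarterArc_inter_threeQuarterArc, mem_inter_iff, and_iff_right hv]
  rw [mem_insert_iff, ← hvA]
  refine ⟨fun h => h (mem_insert _ _), fun h z hz => ?_⟩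
  obtain rfl | ⟨k, hk, rfl⟩ := mem_rotSquare_iff.1 hz
  · exact h
  · exact Or.inl (I_zpow_mul_mem_threeQuarterArc_diff_quarterArc hv hk).1

lemma injOn_rotSquare_quarterArc : InjOn rotSquare quarterArc := by
  intro x hx y hy hxy
  obtain rfl | ⟨k, hk, rfl⟩ := mem_rotSquare_iff.1 (hxy ▸ mem_insert y _ : y ∈ rotSquare x)
  · rfl
  · exact absurd hy (I_zpow_mul_mem_threeQuarterArc_diff_quarterArc hx hk).2

theorem inscribedSquares_threeQuarterArc_union {F : Set ℂ} (hF : F ⊆ quarterArc) :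
    InscribedSquares (threeQuarterArc ∪ F) = rotSquare '' insert (cexp ((π / 4 : ℝ) * I)) F := by
  ext S
  constructor
  · rintro ⟨hS, hSC⟩
    have hsphere := union_subset threeQuarterArc_subset_sphere (hF.trans quarterArc_subset_sphere)
    obtain ⟨p, hpS, rfl⟩ := hS.exists_eq_rotSquare (hSC.trans hsphere)
    obtain ⟨v, hv, hpv⟩ := exists_mem_quarterArc_rotSquare_eq (by simpa using hsphere (hSC hpS))
    exact ⟨v, (rotSquare_subset_threeQuarterArc_union_iff hv).1 (hpv ▸ hSC), hpv.symm⟩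
  · rintro ⟨v, hvF, rfl⟩
    have hv : v ∈ quarterArc := insert_subset exp_pi_div_four_mul_I_mem_quarterArc hF hvF
    have hv0 : v ≠ 0 := ne_zero_of_mem_sphere one_ne_zero ⟨v, quarterArc_subset_sphere hv⟩
    exact ⟨isSquarePts_rotSquare hv0, (rotSquare_subset_threeQuarterArc_union_iff hv).2 hvF⟩

/-- If `A₃` is the three-quarter arc `{exp(iθ) : π/4 ≤ θ ≤ 7π/4}` of the unit
circle and `F` is a finite subset of the open quarter arc
`{exp(iθ) : −π/4 < θ < π/4}`, then the squares inscribed in `A₃ ∪ F` are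
exactly the squares `{v, i·v, −v, −i·v}` for `v ∈ F ∪ {exp(iπ/4)}`, and there
are exactly `|F| + 1` of them. -/
theorem inscribed_squares_of_arc_union_finite (F : Finset ℂ)
    (hF : (F : Set ℂ) ⊆
      {z : ℂ | ∃ θ : ℝ, -(π / 4) < θ ∧ θ < π / 4 ∧
        z = Complex.exp (θ * Complex.I)}) :
    InscribedSquares
        ({z : ℂ | ∃ θ : ℝ, π / 4 ≤ θ ∧ θ ≤ 7 * π / 4 ∧
            z = Complex.exp (θ * Complex.I)} ∪ (F : Set ℂ)) =
      (fun v : ℂ => ({v, Complex.I * v, -v, -(Complex.I * v)} : Set ℂ)) ''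
        (insert (Complex.exp ((π / 4 : ℝ) * Complex.I)) (F : Set ℂ)) ∧
    (InscribedSquares
        ({z : ℂ | ∃ θ : ℝ, π / 4 ≤ θ ∧ θ ≤ 7 * π / 4 ∧
            z = Complex.exp (θ * Complex.I)} ∪ (F : Set ℂ))).ncard =
      F.card + 1 := by
  have hπ := pi_pos
  have hFq : (F : Set ℂ) ⊆ quarterArc := fun z hz =>
    let ⟨θ, hθ₁, hθ₂, h⟩ := hF hz
    ⟨θ, hθ₁, hθ₂.le, h⟩
  have heF : cexp ((π / 4 : ℝ) * I) ∉ (F : Set ℂ) := fun he => by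
    obtain ⟨θ, hθ₁, hθ₂, h⟩ := hF he
    have := exp_mul_I_injOn_Ioc (a := -(π / 4)) (b := 7 * π / 4) (by linarith)
      ⟨hθ₁, by linarith⟩ ⟨by linarith, by linarith⟩ h.symm
    linarith
  have hsq := inscribedSquares_threeQuarterArc_union hFq
  refine ⟨hsq, ?_⟩
  change (InscribedSquares (threeQuarterArc ∪ F)).ncard = _
  rw [hsq, (injOn_rotSquare_quarterArc.mono
      (insert_subset exp_pi_div_four_mul_I_mem_quarterArc hFq)).ncard_image,
    ncard_insert_of_notMem heF, ncard_coe_finset]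
end
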